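/- arXiv:1505.04175 — 3 statements merged into one kernel-verified Lean document; each statement's English description precedes it below -/
import Mathlib

section
/- Let G be a hyperbolic group (i.e., a finitely generated group whose Cayley graph with respect to some, equivalently any, finite generating set is δ-hyperbolic). Then for every finite generating set X of G there exists a constant C = C(X, δ) such that PCL_{G,X}(n) ≤ C for all n ∈ ℕ. -/
/- Common definitions: words over a generating set, word length, geodesic and
quasi-geodesic words, cyclic permutations, PC-conjugators, the (permutation)
conjugacy length functions, hyperbolic Cayley graphs, and relative hyperbolicity. -/

namespace PCLPaper

variable {G : Type*} [Group G]

/-- `w` is a word over the alphabet `X ⊆ G`. -/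
def IsWord (X : Set G) (w : List G) : Prop := ∀ x ∈ w, x ∈ X

/-- `X` generates `G` as a monoid. -/
def Generates (X : Set G) : Prop := ∀ g : G, ∃ w : List G, IsWord X w ∧ w.prod = g

/-- The word length `|g|_X` of `g` with respect to `X`. -/
noncomputable def wlen (X : Set G) (g : G) : ℕ :=
  sInf {n | ∃ w : List G, IsWord X w ∧ w.prod = g ∧ w.length = n}

/-- The word metric `d_X(g,h)`. -/
noncomputable def wdist (X : Set G) (g h : G) : ℕ := wlen X (g⁻¹ * h)

/-- The ball `B_X(r)` of radius `r` about the identity. -/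
def ball (X : Set G) (r : ℝ) : Set G := {g : G | (wlen X g : ℝ) ≤ r}

/-- A geodesic word: its length equals the word length of the element it represents. -/
def IsGeodesicWord (X : Set G) (w : List G) : Prop :=
  IsWord X w ∧ w.length = wlen X w.prod

/-- `u'` is a cyclic permutation of `u`. -/
def IsCyclicPerm (u u' : List G) : Prop := ∃ i : ℕ, u' = u.drop i ++ u.take i

/-- `w` is a PC-conjugator for the words `u, v`: it conjugates a cyclic permutation
of `u` to a cyclic permutation of `v`. -/
def IsPCConjugator (u v : List G) (w : G) : Prop :=
  ∃ u' v' : List G, IsCyclicPerm u u' ∧ IsCyclicPerm v v' ∧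
    w * u'.prod = v'.prod * w

/-- `PCL_{G,X}(u,v)`: the minimal `X`-length of a PC-conjugator of `u` and `v`. -/
noncomputable def PCLpair (X : Set G) (u v : List G) : ℕ :=
  sInf {n | ∃ w : G, IsPCConjugator u v w ∧ wlen X w = n}

/-- The permutation conjugacy length function `PCL_{G,X}(n)`: the maximum of
`PCL_{G,X}(u,v)` over geodesic words `u, v` representing conjugate elements with
`ℓ(u) + ℓ(v) ≤ n`. -/
noncomputable def PCL (X : Set G) (n : ℕ) : ℕ :=
  sSup {k | ∃ u v : List G, IsGeodesicWord X u ∧ IsGeodesicWord X v ∧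
    IsConj u.prod v.prod ∧ u.length + v.length ≤ n ∧ PCLpair X u v = k}

/-- The minimal `X`-length of a conjugator `w` with `w * a = b * w`. -/
noncomputable def CLFpair (X : Set G) (a b : G) : ℕ :=
  sInf {n | ∃ w : G, w * a = b * w ∧ wlen X w = n}

/-- The conjugacy length function `CLF_{G,X}(n)`. -/
noncomputable def CLF (X : Set G) (n : ℕ) : ℕ :=
  sSup {k | ∃ u v : List G, IsWord X u ∧ IsWord X v ∧
    IsConj u.prod v.prod ∧ u.length + v.length ≤ n ∧ CLFpair X u.prod v.prod = k}

/-- A `(λ,c)`-quasi-geodesic word over `S`. -/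
def IsQuasiGeodesicWord (S : Set G) (lam c : ℝ) (w : List G) : Prop :=
  IsWord S w ∧ ∀ i j : ℕ, i ≤ j → j ≤ w.length →
    (j : ℝ) - (i : ℝ) ≤ lam * (wdist S (w.take i).prod (w.take j).prod : ℝ) + c

/-- The vertices of the path in the Cayley graph starting at `g` and labelled by `w`. -/
def pathVertices (g : G) (w : List G) : Set G :=
  {h : G | ∃ i ≤ w.length, h = g * (w.take i).prod}

/-- The Cayley graph `Γ(G,S)` is `δ`-hyperbolic: geodesic triangles are `δ`-slim. -/
def SlimTriangles (S : Set G) (δ : ℝ) : Prop :=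
  ∀ (g : G) (p q r : List G), IsGeodesicWord S p → IsGeodesicWord S q →
    IsGeodesicWord S r → p.prod * q.prod = r.prod →
    ∀ x ∈ pathVertices g p,
      ∃ y ∈ pathVertices (g * p.prod) q ∪ pathVertices g r, (wdist S x y : ℝ) ≤ δ

/-- The relative generating set `S = X ∪ ⋃_ω (H_ω \ {1})`. -/
def relGen {Ω : Type*} (X : Set G) (H : Ω → Subgroup G) : Set G :=
  X ∪ ⋃ ω, ((H ω : Set G) \ {1})

/-- The index pair `(i,j)` describes an `Hω`-component of the word `p`:
a maximal subpath all of whose edge labels lie in `Hω`. -/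
def IsComponent (Hω : Subgroup G) (p : List G) (i j : ℕ) : Prop :=
  i < j ∧ j ≤ p.length ∧ (∀ k, i ≤ k → k < j → p.getD k 1 ∈ Hω) ∧
  (i = 0 ∨ p.getD (i - 1) 1 ∉ Hω) ∧ (j = p.length ∨ p.getD j 1 ∉ Hω)

/-- The `Hω`-components `(i,j)` of the path `(x,p)` and `(k,l)` of the path `(y,q)`
are connected: all their vertices lie in the same left coset of `Hω`. -/
def ConnectedAt (Hω : Subgroup G) (x : G) (p : List G) (i j : ℕ)
    (y : G) (q : List G) (k l : ℕ) : Prop :=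
  IsComponent Hω p i j ∧ IsComponent Hω q k l ∧
    (x * (p.take i).prod)⁻¹ * (y * (q.take k).prod) ∈ Hω

/-- The two components are connected, for some common parabolic subgroup. -/
def ConnectedComponents {Ω : Type*} (H : Ω → Subgroup G) (x : G) (p : List G) (i j : ℕ)
    (y : G) (q : List G) (k l : ℕ) : Prop :=
  ∃ ω, ConnectedAt (H ω) x p i j y q k l

/-- The bounded coset penetration property for the pair `(G, {H_ω})`. -/
def BCP {Ω : Type*} (X : Set G) (H : Ω → Subgroup G) : Prop :=
  ∀ lam : ℝ, 1 ≤ lam → ∃ a : ℝ, 0 < a ∧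
    ∀ (g : G) (p q : List G),
      IsQuasiGeodesicWord (relGen X H) lam 0 p →
      IsQuasiGeodesicWord (relGen X H) lam 0 q →
      (wdist X (g * p.prod) (g * q.prod) : ℝ) ≤ 1 →
      (∀ ω i j, IsComponent (H ω) p i j →
        a ≤ (wdist X (g * (p.take i).prod) (g * (p.take j).prod) : ℝ) →
        ∃ k l, ConnectedAt (H ω) g p i j g q k l) ∧
      (∀ i j k l, ConnectedComponents H g p i j g q k l →
        (wdist X (g * (p.take i).prod) (g * (q.take k).prod) : ℝ) ≤ a ∧
        (wdist X (g * (p.take j).prod) (g * (q.take l).prod) : ℝ) ≤ a)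

/-- `G` is hyperbolic relative to the subgroups `{H_ω}`, with respect to the
generating set `X`. -/
def RelativelyHyperbolic {Ω : Type*} (X : Set G) (H : Ω → Subgroup G) : Prop :=
  (∃ δ : ℝ, 0 ≤ δ ∧ SlimTriangles (relGen X H) δ) ∧ BCP X H

/-- The generating set of a subgroup `K` induced by `X`: the set `X ∩ K`,
viewed inside `K`. -/
def subGen (X : Set G) (K : Subgroup G) : Set K := {h : K | (h : G) ∈ X}

/-- The base vertex of the `a`-th side of a polygon with sides `sides` based at `g`. -/
def sideBase (g : G) (sides : List (List G)) (a : ℕ) : G :=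
  g * ((sides.take a).flatten).prod

/-- Side `a` of the polygon is a single component, isolated in the polygon. -/
def SideIsolated {Ω : Type*} (H : Ω → Subgroup G) (g : G) (sides : List (List G))
    (a : ℕ) : Prop :=
  (∃ ω, IsComponent (H ω) (sides.getD a []) 0 (sides.getD a []).length) ∧
  ∀ b i j, b < sides.length → ¬(b = a ∧ i = 0 ∧ j = (sides.getD a []).length) →
    ¬ ConnectedComponents H (sideBase g sides a) (sides.getD a []) 0
        (sides.getD a []).length (sideBase g sides b) (sides.getD b []) i j

/-- `D` satisfies the conclusion of the polygon lemma: in any closed polygon whose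
distinguished sides are isolated components and whose remaining sides are
`(λ,c)`-quasi-geodesics, the total `X`-length of the distinguished sides is at
most `D · (number of sides)`. -/
def PolygonConst {Ω : Type*} (X : Set G) (H : Ω → Subgroup G) (lam c D : ℝ) : Prop :=
  ∀ (g : G) (sides : List (List G)) (I : Finset ℕ),
    (sides.flatten).prod = 1 →
    (∀ a ∈ I, a < sides.length ∧ SideIsolated H g sides a) →
    (∀ a, a < sides.length → a ∉ I →
      IsQuasiGeodesicWord (relGen X H) lam c (sides.getD a [])) →
    ∑ a ∈ I, (wlen X ((sides.getD a []).prod) : ℝ) ≤ D * sides.length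

/-- `v` is derived from `u`: obtained by replacing subwords of `u` whose letters all
lie in a single parabolic subgroup by the single element of `G` they represent. -/
def IsDerived {Ω : Type*} (X : Set G) (H : Ω → Subgroup G) (u v : List G) : Prop :=
  ∃ blocks : List (List G), blocks.flatten = u ∧ (∀ b ∈ blocks, b ≠ []) ∧
    (∀ b ∈ blocks, b.length = 1 ∨ ∃ ω, IsWord (X ∩ (H ω : Set G)) b) ∧
    v = blocks.map List.prod

/-- No subword of `v` of length greater than one represents a parabolic element. -/
def NoLongParabolicSubword {Ω : Type*} (H : Ω → Subgroup G) (v : List G) : Prop :=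
  ∀ w₁ w₂ w₃ : List G, v = w₁ ++ w₂ ++ w₃ → 1 < w₂.length → ∀ ω, w₂.prod ∉ H ω

/-- The properties of the finite generating set produced by the generating set lemma
(Lemma 5.3 of Antolín–Ciobanu, Lemma 3.3 of the paper). -/
structure GoodGenSet {Ω : Type*} (X : Set G) (H : Ω → Subgroup G) (lam c : ℝ) : Prop where
  finite : X.Finite
  generates : Generates X
  lam_ge : 1 ≤ lam
  c_ge : 0 ≤ c
  par_gen : ∀ ω : Ω, ∀ h ∈ H ω, ∃ w : List G, IsWord (X ∩ (H ω : Set G)) w ∧ w.prod = h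
  isom : ∀ ω : Ω, ∀ h ∈ H ω, wlen (X ∩ (H ω : Set G)) h = wlen X h
  geo_par : ∀ ω : Ω, ∀ u : List G, IsGeodesicWord X u → u.prod ∈ H ω →
    IsWord (X ∩ (H ω : Set G)) u
  derived : ∀ u : List G, IsGeodesicWord X u → ∃ v : List G, IsDerived X H u v ∧
    IsQuasiGeodesicWord (relGen X H) lam c v ∧ NoLongParabolicSubword H v

/-- The growth function: the number of elements in the ball of radius `r`. -/
noncomputable def growth (X : Set G) (r : ℝ) : ℕ := (ball X r).ncard

/-- The conjugacy growth function: the number of conjugacy classes meeting the ball. -/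
noncomputable def conjGrowth (X : Set G) (r : ℝ) : ℕ := (ConjClasses.mk '' ball X r).ncard

/-- The exponential growth rate `h_{G,X}`. -/
noncomputable def growthRate (X : Set G) : ℝ :=
  Filter.limsup (fun n : ℕ => Real.log (growth X n) / n) Filter.atTop

/-- The exponential conjugacy growth rate `k_{G,X}`. -/
noncomputable def conjGrowthRate (X : Set G) : ℝ :=
  Filter.limsup (fun n : ℕ => Real.log (conjGrowth X n) / n) Filter.atTop

/-- `f ⪯ g`: there is `C > 0` with `f(n) ≤ C·g(C·n) + C` for all `n`. -/
def Preceq (f g : ℕ → ℕ) : Prop := ∃ C : ℕ, 0 < C ∧ ∀ n, f n ≤ C * g (C * n) + C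

/-- Asymptotic equivalence of functions. -/
def Asymp (f g : ℕ → ℕ) : Prop := Preceq f g ∧ Preceq g f

/-- A group is finite-by-abelian: it has a finite normal subgroup with abelian
quotient. -/
def FiniteByAbelian (K : Type*) [Group K] : Prop :=
  ∃ N : Subgroup K, N.Normal ∧ Finite N ∧ ∀ a b : K, a * b * a⁻¹ * b⁻¹ ∈ N


/-!
Fix a geodesic word `ω` (for `X₀`) of a shortest PC-conjugator of `u` and `v`; it conjugates
cyclic permutations `u'` and `v'`. Multiplying it by prefixes of `u'` and `v'`, or by `v'.prod`,
gives PC-conjugators again, so none of these is shorter. Geodesic words for `X` are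
quasi-geodesics for `X₀`, so by the Morse lemma `X₀`-geodesics stay close to the paths labelled by
`u'` and `v'`, and minimality keeps those paths far from the middle of `ω`. Slimness of the
quadrilateral `ω · u' = v' · ω` then makes the middle of `ω` fellow-travel its translate by `v'`:
every middle prefix `ω s` conjugates `v'.prod` into a fixed ball. If `ω` were long, two of these
conjugates would coincide, and cutting out the segment of `ω` between them would give a shorter
conjugator.

The generating sets are not symmetric, so word distances are only symmetric up to a factor `K`.
-/

section Lists

variable {α : Type*} {S : Set α}

lemma IsWord.append {w w' : List α} (hw : IsWord S w) (hw' : IsWord S w') :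
    IsWord S (w ++ w') := by
  intro x hx
  rcases List.mem_append.mp hx with hx | hx
  exacts [hw x hx, hw' x hx]

lemma IsWord.infix {w w' : List α} (hw : IsWord S w) (h : w' <:+: w) : IsWord S w' :=
  fun x hx => hw x (h.subset hx)

lemma infix_take_drop (w : List α) (i j : ℕ) : (w.drop i).take j <:+: w :=
  (List.take_prefix _ _).isInfix.trans (List.drop_suffix _ _).isInfix

lemma isCyclicPerm_iff {u u' : List α} :
    IsCyclicPerm u u' ↔ ∃ a b : List α, u = a ++ b ∧ u' = b ++ a := by
  constructor
  · rintro ⟨i, rfl⟩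
    exact ⟨u.take i, u.drop i, (List.take_append_drop i u).symm, rfl⟩
  · rintro ⟨a, b, rfl, rfl⟩
    exact ⟨a.length, by simp⟩

lemma isCyclicPerm_iff_isRotated {u u' : List α} : IsCyclicPerm u u' ↔ u ~r u' := by
  constructor
  · rintro ⟨i, rfl⟩
    rcases le_or_gt i u.length with hi | hi
    · exact ⟨i, List.rotate_eq_drop_append_take hi⟩
    · exact ⟨0, by simp [List.drop_eq_nil_of_le hi.le, List.take_of_length_le hi.le]⟩
  · rintro ⟨n, rfl⟩
    rcases eq_or_ne u [] with rfl | hu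
    · exact ⟨0, by simp⟩
    · refine ⟨n % u.length, ?_⟩
      rw [← List.rotate_mod, List.rotate_eq_drop_append_take
        (Nat.mod_lt n (List.length_pos_of_ne_nil hu)).le]

lemma IsCyclicPerm.trans {u u' u'' : List α} (h : IsCyclicPerm u u') (h' : IsCyclicPerm u' u'') :
    IsCyclicPerm u u'' :=
  isCyclicPerm_iff_isRotated.mpr
    ((isCyclicPerm_iff_isRotated.mp h).trans (isCyclicPerm_iff_isRotated.mp h'))

lemma isCyclicPerm_self (u : List α) : IsCyclicPerm u u := ⟨0, by simp⟩

def pathAppend (z z' : ℕ → α) (n : ℕ) (j : ℕ) : α := if j ≤ n then z j else z' (j - n)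

lemma pathAppend_add {z z' : ℕ → α} {n : ℕ} (h : z n = z' 0) (r : ℕ) :
    pathAppend z z' n (n + r) = z' r := by
  rcases r with _ | r
  · simp [pathAppend, h]
  · simp [pathAppend]

lemma pathAppend_cases (z z' : ℕ → α) (n j : ℕ) :
    (j ≤ n ∧ pathAppend z z' n j = z j) ∨ (pathAppend z z' n j = z' (j - n)) := by
  unfold pathAppend; split_ifs with h
  exacts [.inl ⟨h, rfl⟩, .inr rfl]

end Lists

section WordMetric

variable {S T : Set G}

lemma exists_word_length_eq_wlen (hgen : Generates S) (g : G) :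
    ∃ w : List G, IsWord S w ∧ w.prod = g ∧ w.length = wlen S g :=
  have ⟨w, hw, hp⟩ := hgen g
  Nat.sInf_mem (s := {n | ∃ w : List G, IsWord S w ∧ w.prod = g ∧ w.length = n})
    ⟨w.length, w, hw, hp, rfl⟩

lemma exists_isGeodesicWord_prod_eq (hgen : Generates S) (g : G) :
    ∃ c : List G, IsGeodesicWord S c ∧ c.prod = g :=
  have ⟨w, hw, hp, hl⟩ := exists_word_length_eq_wlen hgen g
  ⟨w, ⟨hw, by rw [hp, hl]⟩, hp⟩

lemma wlen_prod_le_length {w : List G} (hw : IsWord S w) : wlen S w.prod ≤ w.length :=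
  Nat.sInf_le ⟨w, hw, rfl, rfl⟩

@[simp]
lemma wlen_one : wlen S (1 : G) = 0 :=
  Nat.le_zero.mp (wlen_prod_le_length (S := S) (w := []) (by simp [IsWord]))

lemma wlen_mul_le (hgen : Generates S) (g h : G) : wlen S (g * h) ≤ wlen S g + wlen S h := by
  obtain ⟨w, hw, rfl, hl⟩ := exists_word_length_eq_wlen hgen g
  obtain ⟨w', hw', rfl, hl'⟩ := exists_word_length_eq_wlen hgen h
  simpa [hl, hl'] using wlen_prod_le_length (hw.append hw')

lemma wdist_triangle (hgen : Generates S) (g h k : G) :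
    wdist S g k ≤ wdist S g h + wdist S h k := by
  simpa [wdist, mul_assoc] using wlen_mul_le hgen (g⁻¹ * h) (h⁻¹ * k)

@[simp]
lemma wdist_self (g : G) : wdist S g g = 0 := by simp [wdist]

@[simp]
lemma wdist_mul_left (k g h : G) : wdist S (k * g) (k * h) = wdist S g h := by
  simp [wdist, mul_assoc]

@[simp]
lemma wdist_one_left (g : G) : wdist S 1 g = wlen S g := by simp [wdist]

lemma wlen_prod_le_mul_length (hgen : Generates S) {K : ℕ} :
    ∀ {w : List G}, (∀ x ∈ w, wlen S x ≤ K) → wlen S w.prod ≤ K * w.length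
  | [], _ => by simp
  | x :: w, h => by
    have := wlen_prod_le_mul_length hgen (w := w) fun y hy => h y (.tail _ hy)
    have := wlen_mul_le hgen x w.prod
    have := h x (.head _)
    simp only [List.prod_cons, List.length_cons]
    nlinarith

lemma exists_forall_mem_wlen_le (hS : S.Finite) (T : Set G) (f : G → G) :
    ∃ K : ℕ, ∀ s ∈ S, wlen T (f s) ≤ K := by
  obtain ⟨K, hK⟩ := (hS.image fun s => wlen T (f s)).bddAbove
  exact ⟨K, fun s hs => hK ⟨s, hs, rfl⟩⟩

lemma exists_wlen_le_mul_wlen (hS : S.Finite) (hgenS : Generates S) (hgenT : Generates T) :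
    ∃ K : ℕ, ∀ g : G, wlen T g ≤ K * wlen S g := by
  obtain ⟨K, hK⟩ := exists_forall_mem_wlen_le hS T id
  refine ⟨K, fun g => ?_⟩
  obtain ⟨w, hw, rfl, hl⟩ := exists_word_length_eq_wlen hgenS g
  exact hl ▸ wlen_prod_le_mul_length hgenT fun x hx => hK x (hw x hx)

lemma exists_wlen_inv_le_mul_wlen (hS : S.Finite) (hgen : Generates S) :
    ∃ K : ℕ, 1 ≤ K ∧ ∀ g : G, wlen S g⁻¹ ≤ K * wlen S g := by
  obtain ⟨K, hK⟩ := exists_forall_mem_wlen_le hS S (·⁻¹)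
  refine ⟨K + 1, le_add_self, fun g => ?_⟩
  obtain ⟨w, hw, rfl, hl⟩ := exists_word_length_eq_wlen hgen g
  rw [List.prod_inv_reverse, ← hl]
  calc wlen S (w.map (·⁻¹)).reverse.prod ≤ (K + 1) * (w.map (·⁻¹)).reverse.length :=
        wlen_prod_le_mul_length hgen fun x hx => by
          obtain ⟨y, hy, rfl⟩ := List.mem_map.mp (List.mem_reverse.mp hx)
          exact (hK y (hw y hy)).trans (Nat.le_succ K)
    _ = (K + 1) * w.length := by simp

end WordMetric

section PrefixProd

variable {S : Set G}

/-- The `i`-th vertex of the path in the Cayley graph that starts at `1` and is labelled by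
`w`; indices beyond `w.length` give the endpoint `w.prod`. -/
def prefixProd (w : List G) (i : ℕ) : G := (w.take i).prod

@[simp]
lemma prefixProd_zero (w : List G) : prefixProd w 0 = 1 := by simp [prefixProd]

@[simp]
lemma prefixProd_length (w : List G) : prefixProd w w.length = w.prod := by
  simp [prefixProd]

lemma prefixProd_append_left {w w' : List G} {i : ℕ} (hi : i ≤ w.length) :
    prefixProd (w ++ w') i = prefixProd w i := by
  simp [prefixProd, List.take_append_of_le_length hi]

lemma prefixProd_append_right (w w' : List G) (i : ℕ) :
    prefixProd (w ++ w') (w.length + i) = w.prod * prefixProd w' i := by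
  simp [prefixProd, List.take_add]

lemma prefixProd_inv_mul {w : List G} {i j : ℕ} (hij : i ≤ j) :
    (prefixProd w i)⁻¹ * prefixProd w j = ((w.drop i).take (j - i)).prod := by
  rw [prefixProd, prefixProd, ← Nat.add_sub_cancel' hij, List.take_add, List.prod_append,
    Nat.add_sub_cancel_left, inv_mul_cancel_left]

lemma IsGeodesicWord.infix {w w' : List G} (hw : IsGeodesicWord S w) (h : w' <:+: w) :
    IsGeodesicWord S w' := by
  obtain ⟨l, r, rfl⟩ := h
  have hw' : IsWord S w' := hw.1.infix (List.infix_append l w' r)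
  refine ⟨hw', le_antisymm ?_ (wlen_prod_le_length hw')⟩
  obtain ⟨v, hv, hvp, hvl⟩ := Nat.sInf_mem (s := {n | ∃ v : List G, IsWord S v ∧
    v.prod = w'.prod ∧ v.length = n}) ⟨_, w', hw', rfl, rfl⟩
  have hl : IsWord S l := fun x hx => hw.1 x (by simp [hx])
  have hr : IsWord S r := fun x hx => hw.1 x (by simp [hx])
  have := wlen_prod_le_length (hl.append (hv.append hr))
  have hlen := hw.2
  simp only [List.prod_append, hvp, List.length_append, ← mul_assoc] at this hlen
  change _ = wlen S w'.prod at hvl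
  omega

lemma IsGeodesicWord.wdist_prefixProd {w : List G} (hw : IsGeodesicWord S w) {i j : ℕ}
    (hij : i ≤ j) (hj : j ≤ w.length) : wdist S (prefixProd w i) (prefixProd w j) = j - i := by
  have h := (hw.infix (infix_take_drop w i (j - i))).2
  rw [wdist, prefixProd_inv_mul hij, ← h]
  simp only [List.length_take, List.length_drop]
  omega

lemma IsGeodesicWord.wlen_prefixProd {w : List G} (hw : IsGeodesicWord S w) {j : ℕ}
    (hj : j ≤ w.length) : wlen S (prefixProd w j) = j := by
  simpa using hw.wdist_prefixProd (Nat.zero_le j) hj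

lemma prefixProd_take_drop (w : List G) {i j r : ℕ} (hr : r ≤ j - i) :
    prefixProd ((w.drop i).take (j - i)) r = (prefixProd w i)⁻¹ * prefixProd w (i + r) := by
  rw [prefixProd_inv_mul (Nat.le_add_right i r), Nat.add_sub_cancel_left, prefixProd,
    List.take_take, min_eq_left hr]

end PrefixProd

section PCConjugator

lemma prod_drop_append_take (w : List G) (i : ℕ) :
    (w.drop i ++ w.take i).prod = (prefixProd w i)⁻¹ * w.prod * prefixProd w i := by
  rw [prefixProd, ← List.prod_take_mul_prod_drop w i, List.prod_append]
  group

lemma isPCConjugator_inv_prefixProd_mul {u v u' v' : List G} (hu : IsCyclicPerm u u')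
    (hv : IsCyclicPerm v v') {x : G} (hx : x * u'.prod = v'.prod * x) (i j : ℕ) :
    IsPCConjugator u v ((prefixProd v' i)⁻¹ * x * prefixProd u' j) := by
  refine ⟨_, _, hu.trans ⟨j, rfl⟩, hv.trans ⟨i, rfl⟩, ?_⟩
  rw [prod_drop_append_take, prod_drop_append_take]
  calc (prefixProd v' i)⁻¹ * x * prefixProd u' j *
        ((prefixProd u' j)⁻¹ * u'.prod * prefixProd u' j)
      = (prefixProd v' i)⁻¹ * (x * u'.prod) * prefixProd u' j := by group
    _ = _ := by rw [hx]; group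

lemma exists_isPCConjugator {u v : List G} (h : IsConj u.prod v.prod) :
    ∃ x : G, IsPCConjugator u v x := by
  obtain ⟨c, hc⟩ := isConj_iff.mp h
  exact ⟨c, u, v, ⟨0, by simp⟩, ⟨0, by simp⟩, by rw [← hc]; group⟩

end PCConjugator

/-- `S` need not be closed under inverses, so its word metric is not symmetric; `K` bounds the
asymmetry. -/
structure SlimGenSet (S : Set G) (Δ K : ℕ) : Prop where
  generates : Generates S
  slim : ∀ p q r : List G, IsGeodesicWord S p → IsGeodesicWord S q → IsGeodesicWord S r →
    p.prod * q.prod = r.prod → ∀ t ≤ p.length,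
      (∃ s ≤ q.length, wdist S (prefixProd p t) (p.prod * prefixProd q s) ≤ Δ) ∨
      (∃ s ≤ r.length, wdist S (prefixProd p t) (prefixProd r s) ≤ Δ)
  wlen_inv_le : ∀ g : G, wlen S g⁻¹ ≤ K * wlen S g
  one_le : 1 ≤ K

lemma SlimTriangles.exists_slimGenSet {S : Set G} {δ : ℝ} (h : SlimTriangles S δ)
    (hS : S.Finite) (hgen : Generates S) : ∃ K : ℕ, SlimGenSet S ⌊δ⌋₊ K := by
  obtain ⟨K, hK1, hK⟩ := exists_wlen_inv_le_mul_wlen hS hgen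
  refine ⟨K, hgen, fun p q r hp hq hr hpqr t ht => ?_, hK, hK1⟩
  obtain ⟨y, hy, hyd⟩ := h 1 p q r hp hq hr hpqr _ ⟨t, ht, rfl⟩
  rcases hy with ⟨s, hs, rfl⟩ | ⟨s, hs, rfl⟩
  · exact .inl ⟨s, hs, by simpa [prefixProd] using Nat.le_floor hyd⟩
  · exact .inr ⟨s, hs, by simpa [prefixProd] using Nat.le_floor hyd⟩

namespace SlimGenSet

variable {S : Set G} {Δ K : ℕ}

lemma wdist_comm_le (hS : SlimGenSet S Δ K) (g h : G) : wdist S h g ≤ K * wdist S g h := by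
  simpa [wdist] using hS.wlen_inv_le (g⁻¹ * h)

lemma slim_mul (hS : SlimGenSet S Δ K) (g : G) {p q r : List G} (hp : IsGeodesicWord S p)
    (hq : IsGeodesicWord S q) (hr : IsGeodesicWord S r) (hpqr : p.prod * q.prod = r.prod)
    {t : ℕ} (ht : t ≤ p.length) :
    (∃ s ≤ q.length, wdist S (g * prefixProd p t) (g * p.prod * prefixProd q s) ≤ Δ) ∨
      (∃ s ≤ r.length, wdist S (g * prefixProd p t) (g * prefixProd r s) ≤ Δ) := by
  simpa only [mul_assoc, wdist_mul_left] using hS.slim p q r hp hq hr hpqr t ht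

lemma exists_wdist_le_of_prod_eq_inv (hS : SlimGenSet S Δ K) {c e : List G}
    (hc : IsGeodesicWord S c) (he : IsGeodesicWord S e) (hce : e.prod = c.prod⁻¹) {r : ℕ}
    (hr : r ≤ e.length) :
    ∃ t ≤ c.length, wdist S (c.prod * prefixProd e r) (prefixProd c t) ≤ Δ := by
  have hnil : IsGeodesicWord S ([] : List G) := ⟨by simp [IsWord], by simp⟩
  rcases hS.slim_mul c.prod he hc hnil (by simp [hce]) hr with ⟨t, ht, hd⟩ | ⟨t, ht, hd⟩
  · exact ⟨t, ht, by simpa [hce] using hd⟩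
  · exact ⟨c.length, le_rfl, by simpa [Nat.le_zero.mp ht] using hd⟩

lemma le_add_of_wdist_prefixProd_le (hS : SlimGenSet S Δ K) {p q : List G}
    (hp : IsGeodesicWord S p) (hq : IsGeodesicWord S q) {s t E : ℕ} (hs : s ≤ p.length)
    (ht : t ≤ q.length) (hd : wdist S (prefixProd p s) (prefixProd q t) ≤ E) :
    t ≤ s + E ∧ s ≤ t + K * E := by
  have h₁ := wdist_triangle hS.generates 1 (prefixProd p s) (prefixProd q t)
  have h₂ := wdist_triangle hS.generates 1 (prefixProd q t) (prefixProd p s)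
  have h₃ := (hS.wdist_comm_le (prefixProd p s) (prefixProd q t)).trans
    (Nat.mul_le_mul_left K hd)
  simp only [wdist_one_left, hp.wlen_prefixProd hs, hq.wlen_prefixProd ht] at h₁ h₂
  omega

lemma sub_le_add_of_wdist_le_of_mul_prod_eq (hS : SlimGenSet S Δ K) {p q : List G}
    (hp : IsGeodesicWord S p) (hq : IsGeodesicWord S q) {g h : G} (hend : g * p.prod = h * q.prod)
    {s t E : ℕ} (hs : s ≤ p.length) (ht : t ≤ q.length)
    (hd : wdist S (g * prefixProd p s) (h * prefixProd q t) ≤ E) :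
    p.length - s ≤ E + (q.length - t) ∧ q.length - t ≤ K * E + (p.length - s) := by
  have hpe : wdist S (g * prefixProd p s) (h * q.prod) = p.length - s := by
    rw [← hend, wdist_mul_left, ← prefixProd_length, hp.wdist_prefixProd hs le_rfl]
  have hqe : wdist S (h * prefixProd q t) (h * q.prod) = q.length - t := by
    rw [wdist_mul_left, ← prefixProd_length, hq.wdist_prefixProd ht le_rfl]
  have h₁ := wdist_triangle hS.generates (g * prefixProd p s) (h * prefixProd q t) (h * q.prod)
  have h₂ := wdist_triangle hS.generates (h * prefixProd q t) (g * prefixProd p s) (h * q.prod)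
  have h₃ := (hS.wdist_comm_le (g * prefixProd p s) (h * prefixProd q t)).trans
    (Nat.mul_le_mul_left K hd)
  omega

lemma wdist_prefixProd_le_of_forall_lt (hS : SlimGenSet S Δ K) {p q r : List G}
    (hp : IsGeodesicWord S p) (hq : IsGeodesicWord S q) (hr : IsGeodesicWord S r)
    (hpqr : p.prod * q.prod = r.prod) {t : ℕ} (ht : t ≤ p.length) (htr : t ≤ r.length)
    (hfar : ∀ s ≤ q.length, Δ < wdist S (prefixProd p t) (p.prod * prefixProd q s)) :
    wdist S (prefixProd p t) (prefixProd r t) ≤ Δ + K * Δ := by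
  obtain ⟨s, hs, hd⟩ := (hS.slim p q r hp hq hr hpqr t ht).resolve_left
    fun ⟨s, hs, hd⟩ => (hfar s hs).not_ge hd
  have hst := hS.le_add_of_wdist_prefixProd_le hp hr ht hs hd
  have h₁ := wdist_triangle hS.generates (prefixProd p t) (prefixProd r s) (prefixProd r t)
  rcases le_total s t with h | h
  · rw [hr.wdist_prefixProd h htr] at h₁
    omega
  · have h₂ := hS.wdist_comm_le (prefixProd r t) (prefixProd r s)
    rw [hr.wdist_prefixProd h hs] at h₂
    have : K * (s - t) ≤ K * Δ := Nat.mul_le_mul_left K (by omega)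
    omega

/-- Slimness of the triangle `r · q⁻¹ = p`, combined with the bigon formed by `q` and a geodesic
for `q.prod⁻¹`. -/
lemma exists_near_of_prod_mul_prod_eq (hS : SlimGenSet S Δ K) (g : G) {p q r : List G}
    (hp : IsGeodesicWord S p) (hq : IsGeodesicWord S q) (hr : IsGeodesicWord S r)
    (hpqr : p.prod * q.prod = r.prod) {t : ℕ} (ht : t ≤ r.length) :
    (∃ s ≤ p.length, wdist S (g * prefixProd r t) (g * prefixProd p s) ≤ 2 * Δ) ∨
      (∃ s ≤ q.length, wdist S (g * prefixProd r t) (g * p.prod * prefixProd q s) ≤ 2 * Δ) := by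
  simp only [mul_assoc, wdist_mul_left]
  obtain ⟨e, he, hep⟩ := exists_isGeodesicWord_prod_eq hS.generates q.prod⁻¹
  have hre : r.prod * e.prod = p.prod := by rw [hep, ← hpqr]; group
  rcases hS.slim r e p hr he hp hre t ht with ⟨s, hs, hd⟩ | ⟨s, hs, hd⟩
  · obtain ⟨s', hs', hd'⟩ := hS.exists_wdist_le_of_prod_eq_inv hq he hep hs
    refine .inr ⟨s', hs', ?_⟩
    have h := wdist_triangle hS.generates (prefixProd r t) (r.prod * prefixProd e s)
      (p.prod * prefixProd q s')
    rw [← hpqr, mul_assoc, wdist_mul_left] at h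
    rw [← hpqr, mul_assoc] at hd
    omega
  · exact .inl ⟨s, hs, by omega⟩

end SlimGenSet

section CoarsePath

variable {S : Set G}

def IsCoarsePath (S : Set G) (κ : ℕ) (z : ℕ → G) (N : ℕ) : Prop :=
  ∀ i < N, wdist S (z i) (z (i + 1)) ≤ κ

lemma IsCoarsePath.mono {κ κ' : ℕ} {z : ℕ → G} {N : ℕ} (h : IsCoarsePath S κ z N)
    (hκ : κ ≤ κ') : IsCoarsePath S κ' z N :=
  fun i hi => (h i hi).trans hκ

lemma isCoarsePath_mul_prefixProd {w : List G} (hw : IsWord S w) (g : G) :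
    IsCoarsePath S 1 (fun i => g * prefixProd w i) w.length := by
  intro i hi
  rw [wdist_mul_left, wdist, prefixProd_inv_mul (Nat.le_succ i)]
  refine (wlen_prod_le_length (hw.infix (infix_take_drop w i _))).trans ?_
  simp

lemma IsCoarsePath.comp_add {κ : ℕ} {z : ℕ → G} {N : ℕ} (h : IsCoarsePath S κ z N) {i j : ℕ}
    (hj : j ≤ N) : IsCoarsePath S κ (fun r => z (i + r)) (j - i) :=
  fun r hr => h (i + r) (by omega)

lemma IsCoarsePath.comp_sub {Δ K κ : ℕ} (hS : SlimGenSet S Δ K) {z : ℕ → G} {N : ℕ}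
    (h : IsCoarsePath S κ z N) {i j : ℕ} (hj : j ≤ N) :
    IsCoarsePath S (K * κ) (fun r => z (j - r)) (j - i) := by
  intro r hr
  have := hS.wdist_comm_le (z (j - (r + 1))) (z (j - r))
  have e : j - (r + 1) + 1 = j - r := by omega
  exact this.trans (Nat.mul_le_mul_left K (e ▸ h (j - (r + 1)) (by omega)))

lemma IsCoarsePath.pathAppend {κ : ℕ} {z z' : ℕ → G} {n n' : ℕ} (h : IsCoarsePath S κ z n)
    (h' : IsCoarsePath S κ z' n') (hzz' : z n = z' 0) :
    IsCoarsePath S κ (pathAppend z z' n) (n + n') := by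
  intro j hj
  rcases lt_or_ge j n with hjn | hjn
  · simpa [PCLPaper.pathAppend, hjn.le, Nat.succ_le_of_lt hjn] using h j hjn
  · obtain ⟨r, rfl⟩ := Nat.exists_eq_add_of_le hjn
    rw [pathAppend_add hzz', add_assoc, pathAppend_add hzz']
    exact h' r (by omega)

end CoarsePath

namespace SlimGenSet

variable {S : Set G} {Δ K : ℕ}

/-- Split the path in the middle: each halving costs `2Δ`. -/
lemma exists_wdist_le_of_isCoarsePath (hS : SlimGenSet S Δ K) {κ : ℕ} :
    ∀ (k N : ℕ) (z : ℕ → G), N ≤ 2 ^ k → IsCoarsePath S κ z N →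
    ∀ c : List G, IsGeodesicWord S c → z 0 * c.prod = z N →
    ∀ t ≤ c.length, ∃ i ≤ N, wdist S (z 0 * prefixProd c t) (z i) ≤ 2 * Δ * k + K * κ
  | 0, N, z, hN, hz, c, hc, hcz, t, ht => by
    refine ⟨0, Nat.zero_le _, ?_⟩
    have hlen : c.length ≤ κ := by
      rw [hc.2, show c.prod = (z 0)⁻¹ * z N by rw [← hcz]; group]
      rcases Nat.le_one_iff_eq_zero_or_eq_one.mp (by simpa using hN) with rfl | rfl
      · simp [wlen_one]
      · exact hz 0 one_pos
    calc wdist S (z 0 * prefixProd c t) (z 0)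
        ≤ K * wdist S (z 0) (z 0 * prefixProd c t) := hS.wdist_comm_le _ _
      _ = K * t := by simp [wdist, hc.wlen_prefixProd ht]
      _ ≤ 2 * Δ * 0 + K * κ := by simpa using Nat.mul_le_mul_left K (ht.trans hlen)
  | k + 1, N, z, hN, hz, c, hc, hcz, t, ht => by
    have hpow : 2 ^ (k + 1) = 2 * 2 ^ k := by ring
    obtain ⟨c₁, hc₁, hc₁p⟩ :=
      exists_isGeodesicWord_prod_eq hS.generates ((z 0)⁻¹ * z (N / 2))
    obtain ⟨d, hd, hdp⟩ := exists_isGeodesicWord_prod_eq hS.generates ((z (N / 2))⁻¹ * z N)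
    have hcd : c₁.prod * d.prod = c.prod := by
      rw [hc₁p, hdp, show c.prod = (z 0)⁻¹ * z N by rw [← hcz]; group]; group
    rcases hS.exists_near_of_prod_mul_prod_eq (z 0) hc₁ hd hc hcd ht with
      ⟨s, hs, hsd⟩ | ⟨s, hs, hsd⟩
    · obtain ⟨i, hi, hid⟩ := exists_wdist_le_of_isCoarsePath hS k (N / 2) z (by omega)
        (fun i hi => hz i (by omega)) c₁ hc₁ (by rw [hc₁p]; group) s hs
      refine ⟨i, by omega, ?_⟩
      have := wdist_triangle hS.generates (z 0 * prefixProd c t) (z 0 * prefixProd c₁ s) (z i)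
      linarith
    · obtain ⟨i, hi, hid⟩ := exists_wdist_le_of_isCoarsePath hS k (N - N / 2)
        (fun i => z (N / 2 + i)) (by omega) (hz.comp_add le_rfl) d hd
        (by simp only [Nat.add_zero, hdp, mul_inv_cancel_left,
          Nat.add_sub_cancel' (Nat.div_le_self N 2)])
        s hs
      have hmid : z 0 * c₁.prod = z (N / 2) := by rw [hc₁p]; group
      simp only [Nat.add_zero, ← hmid] at hid
      refine ⟨N / 2 + i, by omega, ?_⟩
      have := wdist_triangle hS.generates (z 0 * prefixProd c t)
        (z 0 * c₁.prod * prefixProd d s) (z (N / 2 + i))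
      linarith

end SlimGenSet

lemma exists_le_of_two_pow_le (A B : ℕ) : ∃ k₀ : ℕ, ∀ k : ℕ, 2 ^ k ≤ A * k + B → k ≤ k₀ := by
  refine ⟨2 * (2 * A + B + 1) + 1, fun k hk => ?_⟩
  by_contra! hk₀
  have hm : k / 2 * (k / 2) < 2 ^ k := by
    calc k / 2 * (k / 2) < 2 ^ (k / 2) * 2 ^ (k / 2) :=
          Nat.mul_self_lt_mul_self Nat.lt_two_pow_self
      _ = 2 ^ (k / 2 + k / 2) := (pow_add 2 _ _).symm
      _ ≤ 2 ^ k := Nat.pow_le_pow_right two_pos (by omega)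
  have hk2 : k ≤ 2 * (k / 2) + 1 := by omega
  have hk3 : 2 * A + B + 1 ≤ k / 2 := by omega
  nlinarith

section Morse

variable {S X : Set G} {Δ K : ℕ}

lemma exists_isCoarsePath_wdist (hgen : Generates S) (x y : G) :
    ∃ A : ℕ → G, IsCoarsePath S 1 A (wdist S x y) ∧ A 0 = x ∧ A (wdist S x y) = y ∧
      ∀ r ≤ wdist S x y, wdist S x (A r) = r ∧ wdist S (A r) y = wdist S x y - r := by
  obtain ⟨a, ha, hap⟩ := exists_isGeodesicWord_prod_eq hgen (x⁻¹ * y)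
  have hlen : a.length = wdist S x y := by rw [ha.2, hap, wdist]
  have hy : x * prefixProd a a.length = y := by rw [prefixProd_length, hap]; group
  refine ⟨fun r => x * prefixProd a r, hlen ▸ isCoarsePath_mul_prefixProd ha.1 x, by simp,
    hlen ▸ hy, fun r hr => ⟨?_, ?_⟩⟩
  · simp [wdist, ha.wlen_prefixProd (hlen ▸ hr)]
  · rw [← hlen, ← hy, wdist_mul_left, ha.wdist_prefixProd (hlen ▸ hr) le_rfl]

lemma SlimGenSet.le_wdist_of_le_wdist_of_wdist_le (hS : SlimGenSet S Δ K) {x y p : G} {D : ℕ}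
    (hyx : K * (K + 1) * D ≤ wdist S y x) (hyp : wdist S y p ≤ D) : D ≤ wdist S x p := by
  have h₁ := hS.wdist_comm_le x y
  have h₂ := hS.wdist_comm_le y p
  have h₃ := wdist_triangle hS.generates x p y
  have h₄ : K * wdist S y p ≤ K * D := Nat.mul_le_mul_left K hyp
  have h₅ : K * (K + 1) * D ≤ K * (wdist S x p + K * D) := by nlinarith
  have h₆ : K * (K * D + D) ≤ K * (wdist S x p + K * D) := by linarith
  have := Nat.le_of_mul_le_mul_left h₆ hS.one_le
  omega

lemma SlimGenSet.exists_detour_start (hS : SlimGenSet S Δ K) {c : List G}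
    (hc : IsGeodesicWord S c) {z : ℕ → G} {N : ℕ} (hz0 : z 0 = 1) {ts D : ℕ}
    (hnear : ∀ t ≤ c.length, ∃ i ≤ N, wdist S (prefixProd c t) (z i) ≤ D)
    (hfar : ∀ i ≤ N, D ≤ wdist S (prefixProd c ts) (z i)) (hts : ts ≤ c.length) :
    ∃ tm im, tm ≤ ts ∧ ts - tm ≤ K * (K + 1) * D ∧ im ≤ N ∧
      wdist S (prefixProd c tm) (z im) ≤ D ∧ ∃ (n : ℕ) (A : ℕ → G), IsCoarsePath S 1 A n ∧
        n ≤ D ∧ A 0 = prefixProd c tm ∧ A n = z im ∧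
        ∀ r ≤ n, D ≤ wdist S (prefixProd c ts) (A r) := by
  by_cases hT : K * (K + 1) * D ≤ ts
  · obtain ⟨im, him, hd⟩ := hnear (ts - K * (K + 1) * D) (by omega)
    obtain ⟨A, hA, hA0, hAn, hAr⟩ := exists_isCoarsePath_wdist hS.generates
      (prefixProd c (ts - K * (K + 1) * D)) (z im)
    refine ⟨_, im, Nat.sub_le _ _, by omega, him, hd, _, A, hA, hd, hA0, hAn, fun r hr => ?_⟩
    refine hS.le_wdist_of_le_wdist_of_wdist_le ?_ ((hAr r hr).1.le.trans (hr.trans hd))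
    rw [hc.wdist_prefixProd (Nat.sub_le _ _) hts]
    omega
  · refine ⟨0, 0, Nat.zero_le _, by omega, Nat.zero_le _, by simp [hz0], 0, fun _ => z 0,
      fun _ h => absurd h (Nat.not_lt_zero _), Nat.zero_le _, by simp [hz0], rfl,
      fun _ _ => hfar 0 (Nat.zero_le _)⟩

lemma SlimGenSet.exists_detour_end (hS : SlimGenSet S Δ K) {c : List G}
    (hc : IsGeodesicWord S c) {z : ℕ → G} {N : ℕ} (hcz : c.prod = z N) {ts D : ℕ}
    (hnear : ∀ t ≤ c.length, ∃ i ≤ N, wdist S (prefixProd c t) (z i) ≤ D)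
    (hfar : ∀ i ≤ N, D ≤ wdist S (prefixProd c ts) (z i)) (hts : ts ≤ c.length) :
    ∃ tp ip, ts ≤ tp ∧ tp ≤ c.length ∧ tp - ts ≤ K * (K + 1) * D ∧ ip ≤ N ∧
      wdist S (prefixProd c tp) (z ip) ≤ D ∧ ∃ (n : ℕ) (B : ℕ → G), IsCoarsePath S 1 B n ∧
        n ≤ K * D ∧ B 0 = z ip ∧ B n = prefixProd c tp ∧
        ∀ r ≤ n, D ≤ wdist S (prefixProd c ts) (B r) := by
  by_cases hT : ts + K * (K + 1) * D ≤ c.length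
  · obtain ⟨ip, hip, hd⟩ := hnear (ts + K * (K + 1) * D) hT
    obtain ⟨B, hB, hB0, hBn, hBr⟩ := exists_isCoarsePath_wdist hS.generates
      (z ip) (prefixProd c (ts + K * (K + 1) * D))
    have hn : wdist S (z ip) (prefixProd c (ts + K * (K + 1) * D)) ≤ K * D :=
      (hS.wdist_comm_le _ _).trans (Nat.mul_le_mul_left K hd)
    refine ⟨_, ip, Nat.le_add_right _ _, hT, by omega, hip, hd, _, B, hB, hn, hB0, hBn,
      fun r hr => ?_⟩
    have h₁ := wdist_triangle hS.generates (prefixProd c ts) (B r)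
      (prefixProd c (ts + K * (K + 1) * D))
    have h₂ : K * D + D ≤ K * (K + 1) * D := by nlinarith [hS.one_le]
    rw [hc.wdist_prefixProd (Nat.le_add_right _ _) hT, (hBr r hr).2] at h₁
    omega
  · refine ⟨c.length, N, hts, le_rfl, by omega, le_rfl, by simp [hcz], 0, fun _ => z N,
      fun _ h => absurd h (Nat.not_lt_zero _), Nat.zero_le _, rfl, by simp [hcz],
      fun _ _ => hfar N le_rfl⟩

lemma IsCoarsePath.exists_subpath (hS : SlimGenSet S Δ K) {κ lam : ℕ} {z : ℕ → G} {N : ℕ}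
    (hz : IsCoarsePath S κ z N)
    (hlow : ∀ i j, i ≤ j → j ≤ N → j - i ≤ lam * wdist S (z i) (z j)) {i j : ℕ}
    (hi : i ≤ N) (hj : j ≤ N) :
    ∃ (n : ℕ) (Z : ℕ → G), IsCoarsePath S (K * κ) Z n ∧ Z 0 = z i ∧ Z n = z j ∧
      n ≤ lam * (wdist S (z i) (z j) + wdist S (z j) (z i)) ∧ ∀ r ≤ n, ∃ l ≤ N, Z r = z l := by
  rcases le_total i j with hij | hji
  · refine ⟨j - i, fun r => z (i + r), (hz.comp_add hj).mono (Nat.le_mul_of_pos_left κ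
      hS.one_le), by simp, by simp [Nat.add_sub_cancel' hij], ?_, fun r hr => ⟨i + r, by omega,
      rfl⟩⟩
    exact (hlow i j hij hj).trans (Nat.mul_le_mul_left lam (Nat.le_add_right _ _))
  · refine ⟨i - j, fun r => z (i - r), hz.comp_sub hS hi, by simp, by simp [Nat.sub_sub_self hji],
      ?_, fun r hr => ⟨i - r, by omega, rfl⟩⟩
    exact (hlow j i hji hi).trans (Nat.mul_le_mul_left lam (Nat.le_add_left _ _))

lemma exists_maximin (f : ℕ → ℕ → ℕ) (T N : ℕ) :
    ∃ ts ≤ T, ∃ D : ℕ, (∀ t ≤ T, ∃ i ≤ N, f t i ≤ D) ∧ ∀ i ≤ N, D ≤ f ts i := by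
  have hN : (Finset.range (N + 1)).Nonempty := Finset.nonempty_range_add_one
  obtain ⟨ts, hts, hmax⟩ := (Finset.range (T + 1)).exists_max_image
    (fun t => (Finset.range (N + 1)).inf' hN (f t)) Finset.nonempty_range_add_one
  refine ⟨ts, Nat.lt_succ_iff.mp (Finset.mem_range.mp hts),
    (Finset.range (N + 1)).inf' hN (f ts), fun t ht => ?_,
    fun i hi => Finset.inf'_le _ (Finset.mem_range.mpr (Nat.lt_succ_of_le hi))⟩
  obtain ⟨i, hi, heq⟩ := Finset.exists_mem_eq_inf' hN (f t)
  exact ⟨i, Nat.lt_succ_iff.mp (Finset.mem_range.mp hi),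
    heq ▸ hmax t (Finset.mem_range.mpr (Nat.lt_succ_of_le ht))⟩

/-- The detour goes from `c tm` to a nearest point of `z`, follows `z`, and comes back to `c tp`;
`tm` and `tp` are far enough from `ts` for the detour to avoid the `D`-ball around `c ts`. -/
lemma SlimGenSet.exists_detour (hS : SlimGenSet S Δ K) {κ lam : ℕ} {z : ℕ → G} {N : ℕ}
    (hz : IsCoarsePath S κ z N)
    (hlow : ∀ i j, i ≤ j → j ≤ N → j - i ≤ lam * wdist S (z i) (z j)) (hz0 : z 0 = 1)
    {c : List G} (hc : IsGeodesicWord S c) (hcz : c.prod = z N) {ts D : ℕ}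
    (hts : ts ≤ c.length) (hnear : ∀ t ≤ c.length, ∃ i ≤ N, wdist S (prefixProd c t) (z i) ≤ D)
    (hfar : ∀ i ≤ N, D ≤ wdist S (prefixProd c ts) (z i)) :
    ∃ (tm tp n : ℕ) (ζ : ℕ → G), tm ≤ ts ∧ ts ≤ tp ∧ tp ≤ c.length ∧
      IsCoarsePath S (K * κ + 1) ζ n ∧ ζ 0 = prefixProd c tm ∧ ζ n = prefixProd c tp ∧
      n ≤ (1 + K + lam * (2 * (K + 1) + 2 * (K + 1) * (K * (K + 1)))) * D ∧
      ∀ j ≤ n, D ≤ wdist S (prefixProd c ts) (ζ j) := by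
  obtain ⟨tm, im, htm, hTm, him, hdm, n₁, A, hA, hn₁, hA0, hAn, hAfar⟩ :=
    hS.exists_detour_start hc hz0 hnear hfar hts
  obtain ⟨tp, ip, htp, htpc, hTp, hip, hdp, n₃, B, hB, hn₃, hB0, hBn, hBfar⟩ :=
    hS.exists_detour_end hc hcz hnear hfar hts
  obtain ⟨n₂, Z, hZ, hZ0, hZn, hn₂, hZr⟩ := hz.exists_subpath hS hlow him hip
  have hAZ : A n₁ = Z 0 := hAn.trans hZ0.symm
  have hAZB : pathAppend A Z n₁ (n₁ + n₂) = B 0 := by rw [pathAppend_add hAZ, hZn, hB0]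
  refine ⟨tm, tp, n₁ + n₂ + n₃, pathAppend (pathAppend A Z n₁) B (n₁ + n₂), htm, htp, htpc,
    ((hA.mono (by omega)).pathAppend (hZ.mono (by omega)) hAZ).pathAppend (hB.mono (by omega))
      hAZB, by simp [pathAppend, hA0], by rw [pathAppend_add hAZB, hBn], ?_, fun j hj => ?_⟩
  · have h₁ := wdist_triangle hS.generates (z im) (prefixProd c tm) (z ip)
    have h₂ := wdist_triangle hS.generates (prefixProd c tm) (prefixProd c tp) (z ip)
    have h₃ := wdist_triangle hS.generates (z ip) (prefixProd c tp) (z im)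
    have h₄ := wdist_triangle hS.generates (prefixProd c tp) (prefixProd c tm) (z im)
    have h₅ := hS.wdist_comm_le (prefixProd c tm) (z im)
    have h₆ := hS.wdist_comm_le (prefixProd c tp) (z ip)
    have h₇ := hS.wdist_comm_le (prefixProd c tm) (prefixProd c tp)
    rw [hc.wdist_prefixProd (htm.trans htp) htpc] at h₂ h₇
    have h₈ : (K + 1) * (tp - tm) ≤ (K + 1) * (2 * (K * (K + 1) * D)) :=
      Nat.mul_le_mul_left _ (by omega)
    have h₉ : K * wdist S (prefixProd c tm) (z im) ≤ K * D := Nat.mul_le_mul_left K hdm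
    have h₁₀ : K * wdist S (prefixProd c tp) (z ip) ≤ K * D := Nat.mul_le_mul_left K hdp
    have h₁₁ : wdist S (z im) (z ip) + wdist S (z ip) (z im) ≤
        (2 * (K + 1) + 2 * (K + 1) * (K * (K + 1))) * D := by nlinarith
    nlinarith [Nat.mul_le_mul_left lam h₁₁]
  · rcases pathAppend_cases (pathAppend A Z n₁) B (n₁ + n₂) j with ⟨hj', he⟩ | he
    · rw [he]
      rcases pathAppend_cases A Z n₁ j with ⟨hj'', he'⟩ | he'
      · exact he' ▸ hAfar j hj''
      · obtain ⟨l, hl, hZl⟩ := hZr (j - n₁) (by omega)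
        exact he' ▸ hZl ▸ hfar l hl
    · exact he ▸ hBfar _ (by omega)

/-- Log-stability along the detour gives `D ≲ log D`. -/
lemma SlimGenSet.exists_le_of_farthest (hS : SlimGenSet S Δ K) (κ lam : ℕ) :
    ∃ M : ℕ, ∀ (N : ℕ) (z : ℕ → G), IsCoarsePath S κ z N →
      (∀ i j, i ≤ j → j ≤ N → j - i ≤ lam * wdist S (z i) (z j)) → z 0 = 1 →
      ∀ c : List G, IsGeodesicWord S c → c.prod = z N → ∀ ts ≤ c.length, ∀ D : ℕ,
      (∀ t ≤ c.length, ∃ i ≤ N, wdist S (prefixProd c t) (z i) ≤ D) →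
      (∀ i ≤ N, D ≤ wdist S (prefixProd c ts) (z i)) → D ≤ M := by
  set C := 1 + K + lam * (2 * (K + 1) + 2 * (K + 1) * (K * (K + 1)))
  obtain ⟨k₀, hk₀⟩ := exists_le_of_two_pow_le (4 * C * Δ) (2 * C * (K * (K * κ + 1)) + 2)
  refine ⟨2 * Δ * k₀ + K * (K * κ + 1), ?_⟩
  intro N z hz hlow hz0 c hc hcz ts hts D hnear hfar
  obtain ⟨tm, tp, n, ζ, htm, htp, htpc, hζ, hζ0, hζn, hn, hζfar⟩ :=
    hS.exists_detour hz hlow hz0 hc hcz hts hnear hfar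
  have hc' := hc.infix (infix_take_drop c tm (tp - tm))
  have hc'len : ((c.drop tm).take (tp - tm)).length = tp - tm := by simp; omega
  have hpow : n ≤ 2 ^ (Nat.log 2 n + 1) := (Nat.lt_pow_succ_log_self one_lt_two n).le
  obtain ⟨j, hj, hjd⟩ := hS.exists_wdist_le_of_isCoarsePath _ n ζ hpow hζ _ hc'
    (by rw [hζ0, hζn, ← prefixProd_inv_mul (htm.trans htp), mul_inv_cancel_left])
    (ts - tm) (by omega)
  rw [hζ0, prefixProd_take_drop c (by omega), mul_inv_cancel_left,
    Nat.add_sub_cancel' htm] at hjd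
  have hD := (hζfar j hj).trans hjd
  have h2k : 2 ^ (Nat.log 2 n + 1) ≤ 2 * n + 2 := by
    rcases eq_or_ne n 0 with rfl | hn0
    · simp
    · have := Nat.pow_log_le_self 2 hn0
      rw [pow_succ]
      omega
  have hn' : n ≤ C * D := hn
  have hk := hk₀ (Nat.log 2 n + 1) (by linarith [Nat.mul_le_mul_left C hD])
  nlinarith [Nat.mul_le_mul_left (2 * Δ) hk]

theorem SlimGenSet.exists_wdist_le_of_isQuasiGeodesic (hS : SlimGenSet S Δ K) (κ lam : ℕ) :
    ∃ M : ℕ, ∀ (N : ℕ) (z : ℕ → G), IsCoarsePath S κ z N →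
      (∀ i j, i ≤ j → j ≤ N → j - i ≤ lam * wdist S (z i) (z j)) → z 0 = 1 →
      ∀ c : List G, IsGeodesicWord S c → c.prod = z N →
      ∀ t ≤ c.length, ∃ i ≤ N, wdist S (prefixProd c t) (z i) ≤ M := by
  obtain ⟨M, hM⟩ := hS.exists_le_of_farthest κ lam
  refine ⟨M, fun N z hz hlow hz0 c hc hcz t ht => ?_⟩
  obtain ⟨ts, hts, D, hnear, hfar⟩ := exists_maximin
    (fun t i => wdist S (prefixProd c t) (z i)) c.length N
  obtain ⟨i, hi, hd⟩ := hnear t ht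
  exact ⟨i, hi, hd.trans (hM N z hz hlow hz0 c hc hcz ts hts D hnear hfar)⟩

def GeodesicsStayNear (S : Set G) (M : ℕ) (y : List G) : Prop :=
  ∀ β : List G, IsGeodesicWord S β → β.prod = y.prod →
    ∀ t ≤ β.length, ∃ i ≤ y.length, wdist S (prefixProd β t) (prefixProd y i) ≤ M

theorem SlimGenSet.exists_geodesicsStayNear (hS : SlimGenSet S Δ K) (hSfin : S.Finite)
    (hXfin : X.Finite) (hgenX : Generates X) :
    ∃ M : ℕ, ∀ y : List G, IsGeodesicWord X y → GeodesicsStayNear S M y := by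
  obtain ⟨κ, hκ⟩ := exists_wlen_le_mul_wlen hXfin hgenX hS.generates
  obtain ⟨lam, hlam⟩ := exists_wlen_le_mul_wlen hSfin hS.generates hgenX
  obtain ⟨M, hM⟩ := hS.exists_wdist_le_of_isQuasiGeodesic κ lam
  refine ⟨M, fun y hy β hβ hβy t ht => hM y.length (prefixProd y) (fun i hi => ?_)
    (fun i j hij hj => ?_) (prefixProd_zero y) β hβ (by simp [hβy]) t ht⟩
  · have h : wdist S (prefixProd y i) (prefixProd y (i + 1)) ≤
        κ * wdist X (prefixProd y i) (prefixProd y (i + 1)) := hκ _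
    simpa [hy.wdist_prefixProd (Nat.le_succ i) hi] using h
  · have h : wdist X (prefixProd y i) (prefixProd y j) ≤
        lam * wdist S (prefixProd y i) (prefixProd y j) := hlam _
    rwa [hy.wdist_prefixProd hij hj] at h

theorem SlimGenSet.geodesicsStayNear_append (hS : SlimGenSet S Δ K) {M : ℕ} {y₁ y₂ : List G}
    (h₁ : GeodesicsStayNear S M y₁) (h₂ : GeodesicsStayNear S M y₂) :
    GeodesicsStayNear S (M + 2 * Δ) (y₁ ++ y₂) := by
  intro β hβ hβy t ht
  obtain ⟨γ₁, hγ₁, hγ₁p⟩ := exists_isGeodesicWord_prod_eq hS.generates y₁.prod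
  obtain ⟨γ₂, hγ₂, hγ₂p⟩ := exists_isGeodesicWord_prod_eq hS.generates y₂.prod
  rcases hS.exists_near_of_prod_mul_prod_eq 1 hγ₁ hγ₂ hβ (by simp [hβy, hγ₁p, hγ₂p]) ht with
    ⟨s, hs, hd⟩ | ⟨s, hs, hd⟩
  · obtain ⟨i, hi, hid⟩ := h₁ γ₁ hγ₁ hγ₁p s hs
    refine ⟨i, by simp; omega, ?_⟩
    have := wdist_triangle hS.generates (prefixProd β t) (prefixProd γ₁ s) (prefixProd y₁ i)
    simp only [one_mul] at hd
    rw [prefixProd_append_left hi]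
    omega
  · obtain ⟨i, hi, hid⟩ := h₂ γ₂ hγ₂ hγ₂p s hs
    refine ⟨y₁.length + i, by simp; omega, ?_⟩
    have := wdist_triangle hS.generates (prefixProd β t) (y₁.prod * prefixProd γ₂ s)
      (y₁.prod * prefixProd y₂ i)
    simp only [one_mul, hγ₁p, wdist_mul_left] at hd this
    rw [prefixProd_append_right]
    omega

end Morse

section Conjugators

variable {S : Set G}

lemma finite_setOf_wlen_le (hS : S.Finite) (hgen : Generates S) (R : ℕ) :
    {g : G | wlen S g ≤ R}.Finite := by
  have : Finite S := hS
  refine ((List.finite_length_le S R).image fun l => (l.map Subtype.val).prod).subset ?_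
  intro g hg
  obtain ⟨w, hw, rfl, hl⟩ := exists_word_length_eq_wlen hgen g
  lift w to List S using hw
  refine ⟨w, ?_, rfl⟩
  have : (w.map Subtype.val).length ≤ R := hl ▸ hg
  simpa using this

/-- The shorter conjugator `ω s · (ω s')⁻¹ · ω.prod` skips the segment of `ω` between `s`
and `s'`. -/
lemma exists_mul_eq_mul_wlen_lt_of_conj_eq {ω : List G} (hω : IsGeodesicWord S ω)
    (hgen : Generates S) {a b : G} (hab : ω.prod * a = b * ω.prod) {s s' : ℕ} (hss' : s < s')
    (hs' : s' ≤ ω.length)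
    (heq : (prefixProd ω s)⁻¹ * b * prefixProd ω s = (prefixProd ω s')⁻¹ * b * prefixProd ω s') :
    ∃ x : G, x * a = b * x ∧ wlen S x < ω.length := by
  set p := prefixProd ω s
  set p' := prefixProd ω s'
  have hcomm : p * p'⁻¹ * b = b * (p * p'⁻¹) := by
    calc p * p'⁻¹ * b = p * (p'⁻¹ * b * p') * p'⁻¹ := by group
      _ = b * (p * p'⁻¹) := by rw [← heq]; group
  refine ⟨p * p'⁻¹ * ω.prod, by rw [mul_assoc, hab, ← mul_assoc, hcomm, mul_assoc], ?_⟩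
  have h := wlen_mul_le hgen p (p'⁻¹ * ω.prod)
  have hp' : wlen S (p'⁻¹ * ω.prod) = ω.length - s' := by
    rw [← prefixProd_length ω, ← hω.wdist_prefixProd hs' le_rfl]; rfl
  rw [hω.wlen_prefixProd (hss'.le.trans hs'), hp', ← mul_assoc] at h
  omega

lemma exists_mul_eq_mul_wlen_lt {ω : List G} (hω : IsGeodesicWord S ω) (hS : S.Finite)
    (hgen : Generates S) {a b : G} (hab : ω.prod * a = b * ω.prod) {R s₀ n : ℕ}
    (hn : {g : G | wlen S g ≤ R}.ncard < n + 1) (hlen : s₀ + n ≤ ω.length)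
    (hR : ∀ s, s₀ ≤ s → s ≤ s₀ + n → wlen S ((prefixProd ω s)⁻¹ * b * prefixProd ω s) ≤ R) :
    ∃ x : G, x * a = b * x ∧ wlen S x < ω.length := by
  have hfin := finite_setOf_wlen_le hS hgen R
  obtain ⟨s, hs, s', hs', hne, heq⟩ := Finset.exists_ne_map_eq_of_card_lt_of_maps_to
    (s := Finset.Icc s₀ (s₀ + n)) (t := hfin.toFinset)
    (by rw [Nat.card_Icc, ← Set.ncard_eq_toFinset_card _ hfin]; omega)
    (f := fun s => (prefixProd ω s)⁻¹ * b * prefixProd ω s)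
    (fun s hs => by
      simp only [Finset.coe_Icc, Set.mem_Icc] at hs
      simpa using hR s hs.1 hs.2)
  rw [Finset.mem_Icc] at hs hs'
  rcases lt_or_gt_of_ne hne with h | h
  · exact exists_mul_eq_mul_wlen_lt_of_conj_eq hω hgen hab h (by omega) heq
  · exact exists_mul_eq_mul_wlen_lt_of_conj_eq hω hgen hab h (by omega) heq.symm

end Conjugators

namespace SlimGenSet

variable {S X : Set G} {Δ K M : ℕ} {u v ω γ : List G}

/-- A point `ω t` close to the path `ω.prod · u` would make some `ω.prod * prefixProd u j`
shorter than `ω`, so it is close to `γ` instead. -/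
lemma wdist_prefixProd_le_of_le_wlen_mul (hS : SlimGenSet S Δ K) (hu : GeodesicsStayNear S M u)
    (hω : IsGeodesicWord S ω) (hγ : IsGeodesicWord S γ) (hγu : γ.prod = ω.prod * u.prod)
    (hωγ : ω.length ≤ γ.length)
    (hωu : ∀ j, ω.length ≤ wlen S (ω.prod * prefixProd u j)) {t : ℕ}
    (ht : t + (Δ + M + 1) ≤ ω.length) :
    wdist S (prefixProd ω t) (prefixProd γ t) ≤ Δ + K * Δ := by
  obtain ⟨a, ha, hap⟩ := exists_isGeodesicWord_prod_eq hS.generates u.prod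
  refine hS.wdist_prefixProd_le_of_forall_lt hω ha hγ (by rw [hap, hγu]) (by omega) (by omega)
    fun s hs => ?_
  obtain ⟨j, -, hj⟩ := hu a ha hap s hs
  have h₁ := wdist_triangle hS.generates 1 (prefixProd ω t) (ω.prod * prefixProd u j)
  have h₂ := wdist_triangle hS.generates (prefixProd ω t) (ω.prod * prefixProd a s)
    (ω.prod * prefixProd u j)
  rw [wdist_mul_left] at h₂
  rw [wdist_one_left, wdist_one_left, hω.wlen_prefixProd (by omega)] at h₁
  have := hωu j
  omega

lemma exists_wdist_prefixProd_le_mul_prefixProd (hS : SlimGenSet S Δ K)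
    (hu : GeodesicsStayNear S M u) (hv : GeodesicsStayNear S M v) (hω : IsGeodesicWord S ω)
    (hγ : IsGeodesicWord S γ) (hγu : γ.prod = ω.prod * u.prod) (hγv : γ.prod = v.prod * ω.prod)
    (hωγ : ω.length ≤ γ.length)
    (hωu : ∀ j, ω.length ≤ wlen S (ω.prod * prefixProd u j))
    (hωv : ∀ i, ω.length ≤ wlen S ((prefixProd v i)⁻¹ * ω.prod)) {s : ℕ}
    (hs₀ : K * (2 * Δ + M) + K * (Δ + K * Δ) < s) (hs : s + (Δ + M + 1) ≤ ω.length) :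
    ∃ t ≤ ω.length, wdist S (prefixProd γ s) (v.prod * prefixProd ω t) ≤ 2 * Δ := by
  obtain ⟨b, hb, hbp⟩ := exists_isGeodesicWord_prod_eq hS.generates v.prod
  rcases hS.exists_near_of_prod_mul_prod_eq 1 hb hω hγ (by rw [hbp, hγv]) (t := s) (by omega) with
    ⟨r, hr, hd⟩ | ⟨t, ht, hd⟩
  · -- `ω s` would be close to the path `v`, making some `(prefixProd v i)⁻¹ * ω.prod` short
    exfalso
    obtain ⟨i, -, hi⟩ := hv b hb hbp r hr
    simp only [one_mul] at hd
    have h₁ := wdist_triangle hS.generates (prefixProd γ s) (prefixProd b r) (prefixProd v i)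
    have h₂ := (hS.wdist_comm_le (prefixProd γ s) (prefixProd v i)).trans
      (Nat.mul_le_mul_left K (h₁.trans (by omega : _ ≤ 2 * Δ + M)))
    have h₃ := (hS.wdist_comm_le (prefixProd ω s) (prefixProd γ s)).trans
      (Nat.mul_le_mul_left K (hS.wdist_prefixProd_le_of_le_wlen_mul hu hω hγ hγu hωγ hωu hs))
    have h₄ := wdist_triangle hS.generates (prefixProd v i) (prefixProd γ s) (prefixProd ω s)
    have h₅ := wdist_triangle hS.generates (prefixProd v i) (prefixProd ω s) ω.prod
    rw [← prefixProd_length ω, hω.wdist_prefixProd (by omega) le_rfl] at h₅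
    have := hωv i
    rw [← prefixProd_length ω] at this
    change _ ≤ wdist S _ _ at this
    omega
  · exact ⟨t, ht, by simpa [hbp] using hd⟩

lemma wlen_conj_prefixProd_le (hS : SlimGenSet S Δ K)
    (hu : GeodesicsStayNear S M u) (hv : GeodesicsStayNear S M v) (hω : IsGeodesicWord S ω)
    (hγ : IsGeodesicWord S γ) (hγu : γ.prod = ω.prod * u.prod) (hγv : γ.prod = v.prod * ω.prod)
    (hωγ : ω.length ≤ γ.length)
    (hωu : ∀ j, ω.length ≤ wlen S (ω.prod * prefixProd u j))
    (hωv : ∀ i, ω.length ≤ wlen S ((prefixProd v i)⁻¹ * ω.prod)) {s : ℕ}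
    (hs₀ : K * (2 * Δ + M) + K * (Δ + K * Δ) < s) (hs : s + (Δ + M + 1) ≤ ω.length) :
    wlen S ((prefixProd ω s)⁻¹ * v.prod * prefixProd ω s) ≤
      Δ + K * Δ + 2 * Δ + (K * (2 * Δ) + (K * (2 * Δ + M) + K * (Δ + K * Δ)) + 1 + 2 * Δ) := by
  have hend : 1 * γ.prod = v.prod * ω.prod := by rw [one_mul, hγv]
  have hnear := fun s (hs₀ : K * (2 * Δ + M) + K * (Δ + K * Δ) < s)
      (hs : s + (Δ + M + 1) ≤ ω.length) =>
    (hS.exists_wdist_prefixProd_le_mul_prefixProd hu hv hω hγ hγu hγv hωγ hωu hωv hs₀ hs)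
  set C₁ := K * (2 * Δ + M) + K * (Δ + K * Δ)
  -- the first point of the window bounds `γ.length - ω.length`
  obtain ⟨t₀, ht₀, hd₀⟩ := hnear (C₁ + 1) (Nat.lt_succ_self _) (by omega)
  obtain ⟨t, ht, hd⟩ := hnear s hs₀ hs
  have hγlen := (hS.sub_le_add_of_wdist_le_of_mul_prod_eq (s := C₁ + 1) (E := 2 * Δ) hγ hω hend
    (by omega) ht₀ (by rwa [one_mul])).1
  have ⟨h₁, h₂⟩ := hS.sub_le_add_of_wdist_le_of_mul_prod_eq (s := s) (E := 2 * Δ) hγ hω hend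
    (by omega) ht (by rwa [one_mul])
  have h₃ := hS.wdist_prefixProd_le_of_le_wlen_mul hu hω hγ hγu hωγ hωu hs
  have h₄ := wdist_triangle hS.generates (prefixProd ω s) (prefixProd γ s)
    (v.prod * prefixProd ω t)
  have h₅ := wdist_triangle hS.generates (prefixProd ω s) (v.prod * prefixProd ω t)
    (v.prod * prefixProd ω s)
  have h₆ : wdist S (prefixProd ω t) (prefixProd ω s) ≤ K * (2 * Δ) +
      (K * (2 * Δ + M) + K * (Δ + K * Δ)) + 1 + 2 * Δ := by
    rcases le_total t s with hts | hst
    · rw [hω.wdist_prefixProd hts (by omega)]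
      omega
    · refine (hS.wdist_comm_le _ _).trans ?_
      rw [hω.wdist_prefixProd hst ht]
      nlinarith [Nat.mul_le_mul_left K (by omega : t - s ≤ 2 * Δ)]
  rw [wdist_mul_left] at h₅
  rw [mul_assoc]
  change wdist S _ _ ≤ _
  omega

theorem exists_length_le_of_minimal (hS : SlimGenSet S Δ K) (hSfin : S.Finite) (M : ℕ) :
    ∃ C : ℕ, ∀ u v ω : List G, GeodesicsStayNear S M u → GeodesicsStayNear S M v →
      IsGeodesicWord S ω → ω.prod * u.prod = v.prod * ω.prod →
      (∀ x, IsPCConjugator u v x → ω.length ≤ wlen S x) → ω.length ≤ C := by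
  set C₁ := K * (2 * Δ + M) + K * (Δ + K * Δ)
  set R := Δ + K * Δ + 2 * Δ + (K * (2 * Δ) + C₁ + 1 + 2 * Δ)
  set n := {g : G | wlen S g ≤ R}.ncard
  refine ⟨C₁ + 1 + n + (Δ + M + 1), fun u v ω hu hv hω hconj hmin => ?_⟩
  by_contra! hlen
  have hpc {x : G} (hx : x * u.prod = v.prod * x) (i j : ℕ) :=
    isPCConjugator_inv_prefixProd_mul (isCyclicPerm_self u) (isCyclicPerm_self v) hx i j
  obtain ⟨γ, hγ, hγp⟩ := exists_isGeodesicWord_prod_eq hS.generates (v.prod * ω.prod)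
  have hωγ : ω.length ≤ γ.length := by
    rw [hγ.2, hγp]
    simpa using hmin _ (hpc (x := v.prod * ω.prod) (by rw [mul_assoc, hconj]) 0 0)
  obtain ⟨x, hx, hxlen⟩ := exists_mul_eq_mul_wlen_lt hω hSfin hS.generates hconj
    (s₀ := C₁ + 1) (n := n) (Nat.lt_succ_self n) (by omega) fun s hs₀ hs =>
      hS.wlen_conj_prefixProd_le hu hv hω hγ (hγp.trans hconj.symm) hγp hωγ
        (fun j => by simpa using hmin _ (hpc hconj 0 j))
        (fun i => by simpa using hmin _ (hpc hconj i 0)) (by omega) (by omega)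
  exact (hmin x ⟨u, v, isCyclicPerm_self u, isCyclicPerm_self v, hx⟩).not_gt hxlen

lemma geodesicsStayNear_of_isCyclicPerm (hS : SlimGenSet S Δ K)
    (hM : ∀ y : List G, IsGeodesicWord X y → GeodesicsStayNear S M y) {y y' : List G}
    (hy : IsGeodesicWord X y) (hyy' : IsCyclicPerm y y') : GeodesicsStayNear S (M + 2 * Δ) y' := by
  obtain ⟨a, b, rfl, rfl⟩ := isCyclicPerm_iff.mp hyy'
  exact hS.geodesicsStayNear_append (hM b (hy.infix (List.suffix_append a b).isInfix))
    (hM a (hy.infix (List.prefix_append a b).isInfix))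

theorem exists_isPCConjugator_wlen_le (hS : SlimGenSet S Δ K) (hSfin : S.Finite)
    (hXfin : X.Finite) (hgenX : Generates X) :
    ∃ C : ℕ, ∀ u v : List G, IsGeodesicWord X u → IsGeodesicWord X v → IsConj u.prod v.prod →
      ∃ x, IsPCConjugator u v x ∧ wlen S x ≤ C := by
  classical
  obtain ⟨M, hM⟩ := hS.exists_geodesicsStayNear hSfin hXfin hgenX
  obtain ⟨C, hC⟩ := hS.exists_length_le_of_minimal hSfin (M + 2 * Δ)
  refine ⟨C, fun u v hu hv huv => ?_⟩
  have hex : ∃ n x, IsPCConjugator u v x ∧ wlen S x = n :=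
    have ⟨x, hx⟩ := exists_isPCConjugator huv
    ⟨_, x, hx, rfl⟩
  obtain ⟨w, hw, hwn⟩ : ∃ x, IsPCConjugator u v x ∧ wlen S x = Nat.find hex := Nat.find_spec hex
  obtain ⟨ω, hω, rfl⟩ := exists_isGeodesicWord_prod_eq hS.generates w
  refine ⟨_, hw, ?_⟩
  obtain ⟨u', v', hu', hv', hωe⟩ := hw
  rw [← hω.2]
  refine hC u' v' ω (hS.geodesicsStayNear_of_isCyclicPerm hM hu hu')
    (hS.geodesicsStayNear_of_isCyclicPerm hM hv hv') hω hωe fun x ⟨u'', v'', hu'', hv'', hx⟩ => ?_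
  rw [hω.2, hwn]
  exact Nat.find_min' hex ⟨x, ⟨u'', v'', hu'.trans hu'', hv'.trans hv'', hx⟩, rfl⟩

end SlimGenSet

theorem pcl_hyperbolic_bounded_general
    (X₀ : Set G) (hfin₀ : X₀.Finite) (hgen₀ : Generates X₀)
    (δ : ℝ) (hhyp : SlimTriangles X₀ δ) :
    ∀ X : Set G, X.Finite → Generates X → ∃ C : ℕ, ∀ n : ℕ, PCL X n ≤ C := by
  intro X hXfin hgenX
  obtain ⟨K, hS⟩ := hhyp.exists_slimGenSet hfin₀ hgen₀
  obtain ⟨C, hC⟩ := hS.exists_isPCConjugator_wlen_le hfin₀ hXfin hgenX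
  obtain ⟨L, hL⟩ := exists_wlen_le_mul_wlen hfin₀ hgen₀ hgenX
  refine ⟨L * C, fun n => csSup_le' ?_⟩
  rintro _ ⟨u, v, hu, hv, huv, -, rfl⟩
  obtain ⟨x, hx, hxC⟩ := hC u v hu hv huv
  calc PCLpair X u v ≤ wlen X x := Nat.sInf_le ⟨x, hx, rfl⟩
    _ ≤ L * wlen X₀ x := hL x
    _ ≤ L * C := Nat.mul_le_mul_left L hxC

/-- **Proposition.** Let `G` be a hyperbolic group (the Cayley graph with respect to
some finite generating set is `δ`-hyperbolic). Then for every finite generating set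
`X` there exists a constant `C = C(X,δ)` such that `PCL_{G,X}(n) ≤ C` for all `n`. -/
theorem pcl_hyperbolic_bounded
    (X₀ : Set G) (hfin₀ : X₀.Finite) (hgen₀ : Generates X₀)
    (δ : ℝ) (hδ : 0 ≤ δ) (hhyp : SlimTriangles X₀ δ) :
    ∀ X : Set G, X.Finite → Generates X → ∃ C : ℕ, ∀ n : ℕ, PCL X n ≤ C :=
  pcl_hyperbolic_bounded_general X₀ hfin₀ hgen₀ δ hhyp

end PCLPaper
end

section
/- Let G be a group with finite generating set X, and suppose PCL_{G,X}(n) = o(n) (i.e., for every ε > 0 there is N with PCL_{G,X}(2n) < εn for all n ≥ N). Then (1/2)·h_{G,X} ≤ k_{G,X} ≤ h_{G,X}, where h_{G,X} = limsup_n log γ_{G,X}(n)^{1/n} is the exponential growth rate and k_{G,X} = limsup_n log ξ_{G,X}(n)^{1/n} is the exponential conjugacy growth rate. -/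
/- Common definitions: words over a generating set, word length, geodesic and
quasi-geodesic words, cyclic permutations, PC-conjugators, the (permutation)
conjugacy length functions, hyperbolic Cayley graphs, and relative hyperbolicity. -/

namespace PCLPaper

variable {G : Type*} [Group G]

/-!
Every `g ∈ B(n)` is conjugate to a fixed representative `r ∈ B(n)` of its conjugacy class.
For geodesic words `u = t d` of `g` and `v` of `r`, some PC-conjugator `w` of length at most
`PCL(2n) = o(n)` conjugates the cyclic permutation `d t` of `u` into a cyclic permutation `v'`
of `v`, and `g = t (d t) t⁻¹ = d⁻¹ (d t) d` where `t` or `d` lies in `B(n/2)`. So `g` is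
determined by its conjugacy class, the rotation `v'`, one of `t`, `d⁻¹` and `w`, whence
`γ(n) ≤ ξ(n) (n + 1) 2γ(n/2) γ(o(n))`.
-/

open Filter Pointwise

/-- `growthRate X` and `conjGrowthRate X` are, by definition, the `expGrowthRate` of
`fun n => growth X n` and `fun n => conjGrowth X n`. -/
noncomputable def expGrowthRate (f : ℕ → ℕ) : ℝ :=
  limsup (fun n : ℕ => Real.log (f n) / n) atTop

theorem eventually_log_two_mul_add_one_le {η : ℝ} (hη : 0 < η) :
    ∀ᶠ n : ℕ in atTop, Real.log (2 * (n + 1)) ≤ η * n := by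
  have hlin : Tendsto (fun n : ℕ => 2 * ((n : ℝ) + 1)) atTop atTop :=
    (tendsto_atTop_add_const_right _ 1 tendsto_natCast_atTop_atTop).const_mul_atTop two_pos
  filter_upwards [(Real.isLittleO_log_id_atTop.comp_tendsto hlin).bound (by positivity : 0 < η / 4),
    eventually_ge_atTop 1] with n hlog hn
  have hn' : (1 : ℝ) ≤ n := by exact_mod_cast hn
  simp only [Function.comp, id, Real.norm_eq_abs] at hlog
  rw [abs_of_pos (by positivity : (0 : ℝ) < 2 * (n + 1))] at hlog
  nlinarith [le_abs_self (Real.log (2 * ((n : ℝ) + 1)))]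

section ExpGrowthRate

variable {f g : ℕ → ℕ} {K : ℕ}

theorem log_le_mul_log_of_le_pow (hf : ∀ n, 1 ≤ f n) (hK : ∀ n, f n ≤ K ^ n) (n : ℕ) :
    Real.log (f n) ≤ n * Real.log K := by
  rw [← Real.log_pow]
  exact Real.log_le_log (by exact_mod_cast hf n) (by exact_mod_cast hK n)

theorem log_nonneg_of_le_pow (hf : ∀ n, 1 ≤ f n) (hK : ∀ n, f n ≤ K ^ n) : 0 ≤ Real.log K :=
  Real.log_nonneg (by exact_mod_cast (hf 1).trans ((hK 1).trans_eq (pow_one K)))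

theorem isBoundedUnder_log_div (hf : ∀ n, 1 ≤ f n) (hK : ∀ n, f n ≤ K ^ n) :
    IsBoundedUnder (· ≤ ·) atTop fun n : ℕ => Real.log (f n) / n := by
  refine isBoundedUnder_of ⟨Real.log K, fun n => div_le_of_le_mul₀ n.cast_nonneg
    (log_nonneg_of_le_pow hf hK) ?_⟩
  linarith [log_le_mul_log_of_le_pow hf hK n]

theorem isCoboundedUnder_log_div (hf : ∀ n, 1 ≤ f n) :
    IsCoboundedUnder (· ≤ ·) atTop fun n : ℕ => Real.log (f n) / n :=
  (isBoundedUnder_of ⟨0, fun n => div_nonneg (Real.log_nonneg (by exact_mod_cast hf n))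
    n.cast_nonneg⟩ : IsBoundedUnder (· ≥ ·) atTop _).isCoboundedUnder_le

theorem expGrowthRate_nonneg (hf : ∀ n, 1 ≤ f n) (hK : ∀ n, f n ≤ K ^ n) :
    0 ≤ expGrowthRate f :=
  le_limsup_of_frequently_le (Frequently.of_forall fun n =>
    div_nonneg (Real.log_nonneg (by exact_mod_cast hf n)) n.cast_nonneg)
    (isBoundedUnder_log_div hf hK)

theorem expGrowthRate_mono (hf : ∀ n, 1 ≤ f n) (hfg : ∀ n, f n ≤ g n) (hK : ∀ n, g n ≤ K ^ n) :
    expGrowthRate f ≤ expGrowthRate g :=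
  limsup_le_limsup (Eventually.of_forall fun n => div_le_div_of_nonneg_right
      (Real.log_le_log (by exact_mod_cast hf n) (by exact_mod_cast hfg n)) n.cast_nonneg)
    (isCoboundedUnder_log_div hf) (isBoundedUnder_log_div (fun n => (hf n).trans (hfg n)) hK)

theorem eventually_log_le (hf : ∀ n, 1 ≤ f n) (hK : ∀ n, f n ≤ K ^ n) {η : ℝ} (hη : 0 < η) :
    ∀ᶠ n : ℕ in atTop, Real.log (f n) ≤ (expGrowthRate f + η) * n := by
  filter_upwards [eventually_lt_of_limsup_lt (lt_add_of_pos_right _ hη)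
    (isBoundedUnder_log_div hf hK), eventually_ge_atTop 1] with n hlt hn
  exact (div_le_iff₀ (by exact_mod_cast hn)).mp hlt.le

end ExpGrowthRate

/-- Taking logarithms in `γ(n) ≤ ξ(n) · (n + 1) · 2γ(n/2) · γ(δn)`, the factor `n + 1` is
subexponential, `γ(n/2)` contributes `h/2` and `γ(δn)` at most `δ n log K`, so `h ≤ k + h/2`. -/
theorem half_expGrowthRate_le {γ ξ : ℕ → ℕ} {K : ℕ} (hγ : ∀ n, 1 ≤ γ n) (hγK : ∀ n, γ n ≤ K ^ n)
    (hξ : ∀ n, 1 ≤ ξ n) (hξK : ∀ n, ξ n ≤ K ^ n)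
    (hrec : ∀ δ : ℝ, 0 < δ → ∀ᶠ n : ℕ in atTop,
      γ n ≤ ξ n * ((n + 1) * (2 * γ (n / 2) * γ ⌈δ * n⌉₊))) :
    expGrowthRate γ / 2 ≤ expGrowthRate ξ := by
  set h := expGrowthRate γ
  set k := expGrowthRate ξ
  have hh : 0 ≤ h := expGrowthRate_nonneg hγ hγK
  have hk : 0 ≤ k := expGrowthRate_nonneg hξ hξK
  have hlogK := log_nonneg_of_le_pow hγ hγK
  have hc : 0 < 3 + 2 * Real.log K := by linarith
  have key : ∀ η : ℝ, 0 < η → h ≤ k + h / 2 + (3 + 2 * Real.log K) * η := by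
    intro η hη
    refine limsup_le_of_le (isCoboundedUnder_log_div hγ) ?_
    filter_upwards [hrec η hη, eventually_log_le hξ hξK hη, eventually_log_two_mul_add_one_le hη,
      (Nat.tendsto_div_const_atTop two_ne_zero).eventually (eventually_log_le hγ hγK hη),
      (tendsto_natCast_atTop_atTop.const_mul_atTop hη).eventually_ge_atTop 1]
      with n hn hlogξ hlog2 hlogγ hηn
    have hpos : ∀ m, (0 : ℝ) < γ m := fun m => by exact_mod_cast hγ m
    have hsplit : Real.log (γ n) ≤ Real.log (ξ n) + Real.log (2 * (n + 1)) +
        Real.log (γ (n / 2)) + Real.log (γ ⌈η * n⌉₊) := by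
      have hξpos : (0 : ℝ) < ξ n := by exact_mod_cast hξ n
      have h2 : (0 : ℝ) < 2 * (n + 1) := by positivity
      rw [← Real.log_mul hξpos.ne' h2.ne', ← Real.log_mul (mul_pos hξpos h2).ne' (hpos _).ne',
        ← Real.log_mul (mul_pos (mul_pos hξpos h2) (hpos _)).ne' (hpos _).ne']
      exact Real.log_le_log (hpos n) (by
        calc (γ n : ℝ) ≤ ((ξ n * ((n + 1) * (2 * γ (n / 2) * γ ⌈η * n⌉₊)) : ℕ) : ℝ) := by
              exact_mod_cast hn
          _ = _ := by push_cast; ring)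
    have hhalf : (h + η) * ((n / 2 : ℕ) : ℝ) ≤ (h + η) * (n / 2) :=
      mul_le_mul_of_nonneg_left Nat.cast_div_le (by positivity)
    have hceil : Real.log (γ ⌈η * n⌉₊) ≤ 2 * η * n * Real.log K := by
      have := log_le_mul_log_of_le_pow hγ hγK ⌈η * n⌉₊
      have hceil_le : (⌈η * n⌉₊ : ℝ) ≤ 2 * η * n := by
        linarith [Nat.ceil_lt_add_one (by positivity : 0 ≤ η * n)]
      nlinarith
    refine div_le_of_le_mul₀ n.cast_nonneg (by nlinarith) ?_
    nlinarith
  refine le_of_forall_pos_le_add fun t ht => ?_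
  have := key (t / (3 + 2 * Real.log K)) (div_pos ht hc)
  rw [mul_div_cancel₀ _ hc.ne'] at this
  linarith

section WordLength

variable {X : Set G}

theorem wlen_prod_le {w : List G} (hw : IsWord X w) : wlen X w.prod ≤ w.length :=
  Nat.sInf_le ⟨w, hw, rfl, rfl⟩

theorem exists_isGeodesicWord (hgen : Generates X) (g : G) :
    ∃ w, IsGeodesicWord X w ∧ w.prod = g := by
  obtain ⟨w, hw, hwg⟩ := hgen g
  obtain ⟨v, hv, rfl, hlen⟩ :=
    Nat.sInf_mem (⟨w.length, w, hw, hwg, rfl⟩ :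
      {n | ∃ w : List G, IsWord X w ∧ w.prod = g ∧ w.length = n}.Nonempty)
  exact ⟨v, ⟨hv, hlen⟩, rfl⟩

theorem mem_ball_natCast {g : G} {n : ℕ} : g ∈ ball X n ↔ wlen X g ≤ n := by
  simp [ball]

theorem one_mem_ball {r : ℝ} (hr : 0 ≤ r) : (1 : G) ∈ ball X r := by
  have : wlen X (1 : G) = 0 := Nat.le_zero.mp (wlen_prod_le (w := []) (by simp [IsWord]))
  simpa [ball, this] using hr

theorem IsWord.prod_mem_pow {S : Set G} (hXS : X ⊆ S) (hS : 1 ∈ S) :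
    ∀ {w : List G} {n : ℕ}, IsWord X w → w.length ≤ n → w.prod ∈ S ^ n
  | [], n, _, _ => Set.one_mem_pow hS
  | x :: w, n + 1, hw, hlen => by
    rw [List.prod_cons, pow_succ']
    exact Set.mul_mem_mul (hXS (hw x List.mem_cons_self))
      (IsWord.prod_mem_pow hXS hS (fun y hy => hw y (List.mem_cons_of_mem x hy))
        (by simpa using hlen))

theorem exists_finset_ball_subset_pow [DecidableEq G] (hfin : X.Finite) (hgen : Generates X) :
    ∃ S : Finset G, ∀ n : ℕ, ball X n ⊆ ↑(S ^ n) := by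
  refine ⟨insert 1 hfin.toFinset, fun n g hg => ?_⟩
  obtain ⟨w, ⟨hw, hlen⟩, rfl⟩ := exists_isGeodesicWord hgen g
  rw [Finset.coe_pow]
  exact hw.prod_mem_pow (by intro x hx; simp [hx]) (by simp)
    (hlen.trans_le (mem_ball_natCast.mp hg))

theorem finite_ball (hfin : X.Finite) (hgen : Generates X) (n : ℕ) : (ball X n).Finite := by
  classical
  obtain ⟨S, hS⟩ := exists_finset_ball_subset_pow hfin hgen
  exact (S ^ n).finite_toSet.subset (hS n)

theorem exists_growth_le_pow (hfin : X.Finite) (hgen : Generates X) :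
    ∃ K : ℕ, ∀ n : ℕ, growth X n ≤ K ^ n := by
  classical
  obtain ⟨S, hS⟩ := exists_finset_ball_subset_pow hfin hgen
  refine ⟨S.card, fun n => ?_⟩
  calc growth X n ≤ (S ^ n).card := by
        rw [growth, ← Set.ncard_coe_finset]; exact Set.ncard_le_ncard (hS n)
    _ ≤ S.card ^ n := Finset.card_pow_le

theorem one_le_growth (hfin : X.Finite) (hgen : Generates X) (n : ℕ) : 1 ≤ growth X n :=
  (Set.ncard_pos (finite_ball hfin hgen n)).mpr ⟨1, one_mem_ball n.cast_nonneg⟩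

theorem one_le_conjGrowth (hfin : X.Finite) (hgen : Generates X) (n : ℕ) :
    1 ≤ conjGrowth X n :=
  (Set.ncard_pos ((finite_ball hfin hgen n).image _)).mpr
    ⟨_, 1, one_mem_ball n.cast_nonneg, rfl⟩

theorem conjGrowth_le_growth (hfin : X.Finite) (hgen : Generates X) (n : ℕ) :
    conjGrowth X n ≤ growth X n :=
  Set.ncard_image_le (finite_ball hfin hgen n)

end WordLength

theorem finite_setOf_isWord_length_le {α : Type*} {X : Set α} (hfin : X.Finite) (m : ℕ) :
    {w : List α | IsWord X w ∧ w.length ≤ m}.Finite := by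
  have := hfin.to_subtype
  refine ((List.finite_length_le X m).image (List.map Subtype.val)).subset ?_
  rintro w ⟨hw, hm⟩
  exact ⟨w.attach.map fun x => ⟨x.1, hw _ x.2⟩, by simpa using hm, by simp⟩

section Conjugacy

variable {X : Set G}

theorem PCLpair_le_PCL (hfin : X.Finite) {u v : List G} {m : ℕ} (hu : IsGeodesicWord X u)
    (hv : IsGeodesicWord X v) (hconj : IsConj u.prod v.prod) (hm : u.length + v.length ≤ m) :
    PCLpair X u v ≤ PCL X m := by
  refine le_csSup (Set.Finite.bddAbove ?_) ⟨u, v, hu, hv, hconj, hm, rfl⟩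
  have hW := finite_setOf_isWord_length_le hfin m
  refine ((hW.prod hW).image fun p => PCLpair X p.1 p.2).subset ?_
  rintro k ⟨u', v', hu', hv', -, hm', rfl⟩
  exact ⟨(u', v'), ⟨⟨hu'.1, show u'.length ≤ m by omega⟩, hv'.1, show v'.length ≤ m by omega⟩,
    rfl⟩

theorem exists_isPCConjugator_wlen_eq {u v : List G} (hconj : IsConj u.prod v.prod) :
    ∃ w : G, IsPCConjugator u v w ∧ wlen X w = PCLpair X u v := by
  obtain ⟨c, hc⟩ := isConj_iff.mp hconj
  have hc' : c * u.prod = v.prod * c := by rw [← hc]; group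
  exact Nat.sInf_mem (⟨wlen X c, c, ⟨u, v, ⟨0, by simp⟩, ⟨0, by simp⟩, hc'⟩, rfl⟩ :
    {n | ∃ w : G, IsPCConjugator u v w ∧ wlen X w = n}.Nonempty)

theorem IsCyclicPerm.exists_le_length {α : Type*} {u u' : List α} (h : IsCyclicPerm u u') :
    ∃ i ≤ u.length, u' = u.drop i ++ u.take i := by
  obtain ⟨i, rfl⟩ := h
  rcases le_total i u.length with hi | hi
  · exact ⟨i, hi, rfl⟩
  · exact ⟨0, Nat.zero_le _, by simp [List.drop_of_length_le hi, List.take_of_length_le hi]⟩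

/-- `X` need not be symmetric, so the conjugator `d⁻¹` of `u = t d` is only known to lie in
`B(n/2)⁻¹`. -/
theorem exists_conj_of_isCyclicPerm {u u' : List G} {n : ℕ} (hu : IsWord X u)
    (hn : u.length ≤ n) (h : IsCyclicPerm u u') :
    ∃ c ∈ ball X (n / 2 : ℕ) ∪ (ball X (n / 2 : ℕ))⁻¹, u.prod = c * u'.prod * c⁻¹ := by
  obtain ⟨i, rfl⟩ := h
  have ht := wlen_prod_le (X := X) (w := u.take i) fun x hx => hu x (List.mem_of_mem_take hx)
  have hd := wlen_prod_le (X := X) (w := u.drop i) fun x hx => hu x (List.mem_of_mem_drop hx)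
  have hlen : (u.take i).length + (u.drop i).length = u.length := by simp; omega
  rw [← List.take_append_drop i u, List.prod_append, List.prod_append]
  simp only [List.take_append_drop]
  by_cases hshort : wlen X (u.take i).prod ≤ n / 2
  · exact ⟨(u.take i).prod, .inl (mem_ball_natCast.mpr hshort), by group⟩
  · refine ⟨(u.drop i).prod⁻¹, .inr ?_, by group⟩
    simpa only [Set.mem_inv, inv_inv, mem_ball_natCast] using (by omega : _ ≤ n / 2)

end Conjugacy

section Counting

variable {X : Set G}

/-- `F (κ, j, c, w) = (c w⁻¹) v' (c w⁻¹)⁻¹`, with `v'` the `j`-th rotation of a geodesic word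
for a chosen representative of `κ` in `B(n)`. -/
theorem ball_subset_image_conj (hfin : X.Finite) (hgen : Generates X) {n m : ℕ}
    (hm : PCL X (2 * n) ≤ m) :
    ∃ F : ConjClasses G × ℕ × G × G → G, ball X n ⊆ F '' ((ConjClasses.mk '' ball X n) ×ˢ
      Set.Iic n ×ˢ (ball X (n / 2 : ℕ) ∪ (ball X (n / 2 : ℕ))⁻¹) ×ˢ ball X m) := by
  choose! rep hrep using fun κ (hκ : κ ∈ ConjClasses.mk '' ball X n) => hκ
  choose geo hgeo using exists_isGeodesicWord hgen
  refine ⟨fun ⟨κ, j, c, w⟩ => (c * w⁻¹) * ((geo (rep κ)).drop j ++ (geo (rep κ)).take j).prod *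
    (c * w⁻¹)⁻¹, fun g hg => ?_⟩
  have hκ : ConjClasses.mk g ∈ ConjClasses.mk '' ball X n := ⟨g, hg, rfl⟩
  obtain ⟨hr, hrg⟩ := hrep _ hκ
  set r := rep (ConjClasses.mk g)
  obtain ⟨hu, hug⟩ := hgeo g
  obtain ⟨hv, hvr⟩ := hgeo r
  have hconj : IsConj (geo g).prod (geo r).prod := by
    rw [hug, hvr]; exact ConjClasses.mk_eq_mk_iff_isConj.mp hrg.symm
  have hun : (geo g).length ≤ n := by rw [hu.2, hug]; exact mem_ball_natCast.mp hg
  have hvn : (geo r).length ≤ n := by rw [hv.2, hvr]; exact mem_ball_natCast.mp hr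
  obtain ⟨w, ⟨u', v', hu', hv', hw⟩, hwlen⟩ := exists_isPCConjugator_wlen_eq (X := X) hconj
  have hwm : wlen X w ≤ m := hwlen ▸ (PCLpair_le_PCL hfin hu hv hconj (by omega)).trans hm
  obtain ⟨j, hj, rfl⟩ := hv'.exists_le_length
  obtain ⟨c, hc, hcg⟩ := exists_conj_of_isCyclicPerm hu.1 hun hu'
  refine ⟨(ConjClasses.mk g, j, c, w), ⟨hκ, hj.trans hvn, hc, mem_ball_natCast.mpr hwm⟩, ?_⟩
  have hu'w : u'.prod = w⁻¹ * ((geo r).drop j ++ (geo r).take j).prod * w := by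
    rw [mul_assoc, ← hw]; group
  calc (c * w⁻¹) * ((geo r).drop j ++ (geo r).take j).prod * (c * w⁻¹)⁻¹
      = c * u'.prod * c⁻¹ := by rw [hu'w]; group
    _ = g := hcg ▸ hug

theorem growth_le_conjGrowth_mul (hfin : X.Finite) (hgen : Generates X) {n m : ℕ}
    (hm : PCL X (2 * n) ≤ m) :
    growth X n ≤ conjGrowth X n * ((n + 1) * (2 * growth X (n / 2 : ℕ) * growth X m)) := by
  obtain ⟨F, hF⟩ := ball_subset_image_conj hfin hgen hm
  have hB := finite_ball hfin hgen (n / 2)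
  have hT := ((finite_ball hfin hgen n).image ConjClasses.mk).prod
    ((Set.finite_Iic n).prod ((hB.union hB.inv).prod (finite_ball hfin hgen m)))
  have hBinv : (ball X (n / 2 : ℕ) ∪ (ball X (n / 2 : ℕ))⁻¹).ncard ≤ 2 * growth X (n / 2 : ℕ) :=
    (Set.ncard_union_le _ _).trans (by rw [Set.ncard_inv, growth]; omega)
  calc growth X n ≤ (F '' _).ncard := Set.ncard_le_ncard hF (hT.image F)
    _ ≤ _ := Set.ncard_image_le hT
    _ ≤ _ := by
      rw [Set.ncard_prod, Set.ncard_prod, Set.ncard_prod, Set.ncard_Iic_nat]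
      exact Nat.mul_le_mul_left _ (Nat.mul_le_mul_left _ (Nat.mul_le_mul_right _ hBinv))

end Counting

/-- If `PCL_{G,X}(n) = o(n)` then `(1/2)·h_{G,X} ≤ k_{G,X} ≤ h_{G,X}`, where
`h_{G,X}` and `k_{G,X}` are the exponential growth rate and the exponential
conjugacy growth rate. -/
theorem conj_growth_rate_bounds
    (X : Set G) (hfin : X.Finite) (hgen : Generates X)
    (hsub : ∀ ε : ℝ, 0 < ε → ∃ N : ℕ, ∀ n : ℕ, N ≤ n → (PCL X (2 * n) : ℝ) < ε * n) :
    (1 / 2) * growthRate X ≤ conjGrowthRate X ∧ conjGrowthRate X ≤ growthRate X := by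
  obtain ⟨K, hK⟩ := exists_growth_le_pow hfin hgen
  have hγ := one_le_growth hfin hgen
  have hξ := one_le_conjGrowth hfin hgen
  have hξγ := conjGrowth_le_growth hfin hgen
  refine ⟨?_, expGrowthRate_mono hξ hξγ hK⟩
  rw [one_div_mul_eq_div]
  refine half_expGrowthRate_le hγ hK hξ (fun n => (hξγ n).trans (hK n)) fun δ hδ => ?_
  obtain ⟨N, hN⟩ := hsub δ hδ
  filter_upwards [eventually_ge_atTop N] with n hn
  exact growth_le_conjGrowth_mul hfin hgen
    (Nat.cast_le.mp ((hN n hn).le.trans (Nat.le_ceil _)))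

end PCLPaper
end

section
/- Let G be a finitely generated group hyperbolic relative to {H_ω}_{ω∈Ω}, with finite generating set X as in the generating-set lemma and S = X ∪ ⋃_ω (H_ω \ {1}). Let u, v be geodesic words on X representing conjugate elements and let w ≡ s_1 s_2 … s_n be a geodesic word on S representing a PC-conjugator for u, v of minimal S-length. In the associated hexagon Q in Γ(G,S) (with two opposite sides labelled w and the other four sides labelled by derived quasi-geodesics of the pieces of the cyclic permutations u', v' with w u' = v' w): (1) if 1 < i < n and the edge labelled s_i on the side from 1 to w is not isolated in Q, then it is connected to the edge labelled s_i on the opposite w-side (a horizontal band); (2) if i = 1 or i = n and the s_i-edge is connected to a component on the opposite w-side, then it is connected to the edge labelled s_i on that side. -/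
/-! Every vertex `y` on the `u`-sides of `Q` (the path from `w` to `w u' = v' w`) is itself a
PC-conjugator, and for every vertex `y` on the `v`-sides (the path from `1` to `v'`) so is
`y⁻¹ w`. If the edge `s_i` of `w` lies in the same `H_ω`-coset as such a vertex, the part of `w`
before or after `s_i` can be replaced by a single letter from `H_ω`, which yields a
PC-conjugator shorter than `w` unless `i` is `1` or `n`. Applied to the PC-conjugators `v' w`
and `v'⁻¹ w`, the same shortcut shows that a component of the opposite `w`-side connected to
`s_i` can lie neither before nor after it; since distinct components of `w` do not overlap, it
is the `s_i`-edge itself. -/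

namespace PCLPaper

section Words

variable {α : Type*} {X : Set α}

lemma IsWord.append_s16 {p q : List α} (hp : IsWord X p) (hq : IsWord X q) :
    IsWord X (p ++ q) := by
  simpa [IsWord, or_imp, forall_and] using And.intro hp hq

lemma IsWord.cons {x : α} {p : List α} (hx : x ∈ X) (hp : IsWord X p) :
    IsWord X (x :: p) := by
  simpa [IsWord] using And.intro hx hp

lemma IsWord.take {p : List α} (hp : IsWord X p) (n : ℕ) : IsWord X (p.take n) :=
  fun x hx => hp x (List.mem_of_mem_take hx)

lemma IsWord.drop {p : List α} (hp : IsWord X p) (n : ℕ) : IsWord X (p.drop n) :=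
  fun x hx => hp x (List.mem_of_mem_drop hx)

lemma isCyclicPerm_of_isRotated {u u' : List α} (h : u ~r u') : IsCyclicPerm u u' := by
  obtain ⟨n, rfl⟩ := h
  exact ⟨n % u.length, List.rotate_eq_drop_append_take_mod⟩

end Words

variable {G : Type*} [Group G]

lemma wlen_prod_le_length_s16 {X : Set G} {p : List G} (hp : IsWord X p) :
    wlen X p.prod ≤ p.length :=
  Nat.sInf_le ⟨p, hp, rfl, rfl⟩

lemma wlen_relGen_mul_mul_le {Ω : Type*} {X : Set G} {H : Ω → Subgroup G} {p q : List G}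
    {x : G} {ω : Ω} (hp : IsWord (relGen X H) p) (hq : IsWord (relGen X H) q) (hx : x ∈ H ω) :
    wlen (relGen X H) (p.prod * x * q.prod) ≤ p.length + 1 + q.length := by
  by_cases h1 : x = 1
  · calc wlen (relGen X H) (p.prod * x * q.prod) = wlen (relGen X H) (p ++ q).prod := by
          simp [h1]
      _ ≤ (p ++ q).length := wlen_prod_le_length_s16 (hp.append_s16 hq)
      _ ≤ p.length + 1 + q.length := by simp only [List.length_append]; omega
  · have hxS : x ∈ relGen X H := Or.inr (Set.mem_iUnion.2 ⟨ω, hx, h1⟩)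
    calc wlen (relGen X H) (p.prod * x * q.prod) = wlen (relGen X H) (p ++ x :: q).prod := by
          simp [mul_assoc]
      _ ≤ (p ++ x :: q).length := wlen_prod_le_length_s16 (hp.append_s16 (hq.cons hxS))
      _ = p.length + 1 + q.length := by simp only [List.length_append, List.length_cons]; omega

lemma IsComponent.take_inv_mul_take_mem {K : Subgroup G} {w : List G} {i j : ℕ}
    (h : IsComponent K w i j) : (w.take i).prod⁻¹ * (w.take j).prod ∈ K := by
  obtain ⟨hij, hj, hmem, -, -⟩ := h
  have hsplit : w.take j = w.take i ++ (w.take j).drop i := by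
    conv_lhs => rw [← List.take_append_drop i (w.take j)]
    rw [List.take_take, min_eq_left hij.le]
  rw [hsplit, List.prod_append, inv_mul_cancel_left]
  refine list_prod_mem fun x hx => ?_
  obtain ⟨m, hm, rfl⟩ := List.getElem_of_mem hx
  simp only [List.length_drop, List.length_take] at hm
  have := hmem (i + m) (by omega) (by omega)
  rw [List.getD_eq_getElem _ _ (show i + m < w.length by omega)] at this
  simpa using this

lemma IsComponent.eq_of_lt_of_lt {K : Subgroup G} {w : List G} {i j k l : ℕ}
    (h₁ : IsComponent K w i j) (h₂ : IsComponent K w k l) (hkj : k < j) (hil : i < l) :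
    k = i ∧ l = j := by
  have left_le : ∀ {i j k l}, IsComponent K w i j → IsComponent K w k l →
      i < l → i ≤ k := by
    intro i j k l h₁ h₂ hil
    by_contra! hki
    rcases h₁.2.2.2.1 with h0 | h0
    · omega
    · exact h0 (h₂.2.2.1 _ (by omega) (by omega))
  have right_le : ∀ {i j k l}, IsComponent K w i j → IsComponent K w k l →
      i < l → j ≤ l := by
    intro i j k l h₁ h₂ hil
    by_contra! hlj
    rcases h₂.2.2.2.2 with h0 | h0
    · have := h₁.2.1
      omega
    · exact h0 (h₁.2.2.1 _ (by omega) hlj)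
  exact ⟨le_antisymm (left_le h₂ h₁ hkj) (left_le h₁ h₂ hil),
    le_antisymm (right_le h₂ h₁ hkj) (right_le h₁ h₂ hil)⟩

section PCConjugator

variable {u v u' v' : List G} {z : G}

lemma isPCConjugator_mul_prefix (hu : u ~r u') (hv : v ~r v') (hz : z * u'.prod = v'.prod * z)
    {p s : List G} (hps : u' = p ++ s) : IsPCConjugator u v (z * p.prod) := by
  have hrot : u ~r s ++ p := hu.trans (by rw [hps]; exact List.isRotated_append)
  refine ⟨s ++ p, v', isCyclicPerm_of_isRotated hrot, isCyclicPerm_of_isRotated hv, ?_⟩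
  calc z * p.prod * (s ++ p).prod = z * (p ++ s).prod * p.prod := by
        simp only [List.prod_append]; group
    _ = v'.prod * (z * p.prod) := by rw [← hps, hz, mul_assoc]

lemma isPCConjugator_inv_prefix_mul (hu : u ~r u') (hv : v ~r v')
    (hz : z * u'.prod = v'.prod * z) {p s : List G} (hps : v' = p ++ s) :
    IsPCConjugator u v (p.prod⁻¹ * z) := by
  have hrot : v ~r s ++ p := hv.trans (by rw [hps]; exact List.isRotated_append)
  refine ⟨u', s ++ p, isCyclicPerm_of_isRotated hu, isCyclicPerm_of_isRotated hrot, ?_⟩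
  rw [mul_assoc, hz, hps]
  simp only [List.prod_append]
  group

end PCConjugator

lemma IsDerived.exists_prod_take_eq {Ω : Type*} {X : Set G} {H : Ω → Subgroup G}
    {u ud : List G} (h : IsDerived X H u ud) (k : ℕ) :
    ∃ pre suf : List G, u = pre ++ suf ∧ (ud.take k).prod = pre.prod := by
  obtain ⟨blocks, rfl, -, -, rfl⟩ := h
  refine ⟨(blocks.take k).flatten, (blocks.drop k).flatten, ?_, ?_⟩
  · rw [← List.flatten_append, List.take_append_drop]
  · rw [← List.map_take, ← List.prod_flatten]

def IsMinimalWord (S : Set G) (P : G → Prop) (w : List G) : Prop :=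
  IsWord S w ∧ ∀ z, P z → w.length ≤ wlen S z

namespace IsMinimalWord

variable {Ω : Type*} {X : Set G} {H : Ω → Subgroup G} {P : G → Prop} {w u v u' v' : List G}

lemma take_inv_mul_mul_drop_inv_notMem (hw : IsMinimalWord (relGen X H) P w) {z : G}
    (hz : P z) {a b : ℕ} (hab : a + 1 < b) (hb : b ≤ w.length) {ω : Ω} :
    (w.take a).prod⁻¹ * z * (w.drop b).prod⁻¹ ∉ H ω := by
  intro hx
  have hlen := wlen_relGen_mul_mul_le (hw.1.take a) (hw.1.drop b) hx
  rw [show (w.take a).prod * ((w.take a).prod⁻¹ * z * (w.drop b).prod⁻¹) * (w.drop b).prod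
    = z by group] at hlen
  have := hw.2 z hz
  simp only [List.length_take, List.length_drop] at hlen
  omega

lemma length_le_of_take_inv_mul_mem (hw : IsMinimalWord (relGen X H) P w) {y : G} (hy : P y)
    {i : ℕ} {ω : Ω} (hmem : (w.take i).prod⁻¹ * y ∈ H ω) : w.length ≤ i + 1 := by
  by_contra! h
  exact hw.take_inv_mul_mul_drop_inv_notMem hy (ω := ω) (by omega) le_rfl (by simpa using hmem)

lemma le_one_of_take_inv_mul_mem (hw : IsMinimalWord (relGen X H) P w) {i j : ℕ} {ω : Ω}
    (hc : IsComponent (H ω) w i j) {y : G} (hy : P (y⁻¹ * w.prod))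
    (hmem : (w.take i).prod⁻¹ * y ∈ H ω) : j ≤ 1 := by
  by_contra! h
  refine hw.take_inv_mul_mul_drop_inv_notMem hy (a := 0) (ω := ω) (by omega) hc.2.1 ?_
  have : (w.take 0).prod⁻¹ * (y⁻¹ * w.prod) * (w.drop j).prod⁻¹
      = ((w.take i).prod⁻¹ * y)⁻¹ * ((w.take i).prod⁻¹ * (w.take j).prod) := by
    rw [← List.prod_take_mul_prod_drop w j]
    simp only [List.take_zero, List.prod_nil]
    group
  rw [this]
  exact mul_mem (inv_mem hmem) hc.take_inv_mul_take_mem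

lemma eq_of_connected (hw : IsMinimalWord (relGen X H) P w) {V : G} (h₁ : P (V * w.prod))
    (h₂ : P (V⁻¹ * w.prod)) {i j k l : ℕ} (hconn : ConnectedComponents H 1 w i j V w k l) :
    k = i ∧ l = j := by
  obtain ⟨ω, hc₁, hc₂, hmem⟩ := hconn
  rw [one_mul] at hmem
  by_cases hover : k < j ∧ i < l
  · exact hc₁.eq_of_lt_of_lt hc₂ hover.1 hover.2
  exfalso
  have := hc₁.1
  have := hc₂.1
  rcases not_and_or.1 hover with hjk | hli
  · refine hw.take_inv_mul_mul_drop_inv_notMem h₁ (a := i) (ω := ω) (by omega) hc₂.2.1 ?_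
    have : (w.take i).prod⁻¹ * (V * w.prod) * (w.drop l).prod⁻¹
        = (w.take i).prod⁻¹ * (V * (w.take k).prod)
          * ((w.take k).prod⁻¹ * (w.take l).prod) := by
      rw [← List.prod_take_mul_prod_drop w l]
      group
    rw [this]
    exact mul_mem hmem hc₂.take_inv_mul_take_mem
  · refine hw.take_inv_mul_mul_drop_inv_notMem h₂ (a := k) (ω := ω) (by omega) hc₁.2.1 ?_
    have : (w.take k).prod⁻¹ * (V⁻¹ * w.prod) * (w.drop j).prod⁻¹
        = ((w.take i).prod⁻¹ * (V * (w.take k).prod))⁻¹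
          * ((w.take i).prod⁻¹ * (w.take j).prod) := by
      rw [← List.prod_take_mul_prod_drop w j]
      group
    rw [this]
    exact mul_mem (inv_mem hmem) hc₁.take_inv_mul_take_mem

lemma length_le_of_connected_uSide (hw : IsMinimalWord (relGen X H) (IsPCConjugator u v) w)
    (hu : u ~r u') (hv : v ~r v') (hwuv : w.prod * u'.prod = v'.prod * w.prod)
    {p q r qd : List G} (hpqr : u' = p ++ q ++ r) (hq : IsDerived X H q qd) {i j k l : ℕ}
    (hconn : ConnectedComponents H 1 w i j (w.prod * p.prod) qd k l) : w.length ≤ i + 1 := by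
  obtain ⟨ω, -, -, hmem⟩ := hconn
  obtain ⟨pre, suf, rfl, hpre⟩ := hq.exists_prod_take_eq k
  refine hw.length_le_of_take_inv_mul_mem (ω := ω)
    (isPCConjugator_mul_prefix hu hv hwuv (p := p ++ pre) (s := suf ++ r) (by simp [hpqr])) ?_
  simpa [hpre, mul_assoc] using hmem

lemma le_one_of_connected_vSide (hw : IsMinimalWord (relGen X H) (IsPCConjugator u v) w)
    (hu : u ~r u') (hv : v ~r v') (hwuv : w.prod * u'.prod = v'.prod * w.prod)
    {p q r qd : List G} (hpqr : v' = p ++ q ++ r) (hq : IsDerived X H q qd) {i j k l : ℕ}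
    (hconn : ConnectedComponents H 1 w i j p.prod qd k l) : j ≤ 1 := by
  obtain ⟨ω, hc, -, hmem⟩ := hconn
  obtain ⟨pre, suf, rfl, hpre⟩ := hq.exists_prod_take_eq k
  refine hw.le_one_of_take_inv_mul_mem hc
    (isPCConjugator_inv_prefix_mul hu hv hwuv (p := p ++ pre) (s := suf ++ r) (by simp [hpqr])) ?_
  simpa [hpre, mul_assoc] using hmem

lemma eq_of_connected_opposite (hw : IsMinimalWord (relGen X H) (IsPCConjugator u v) w)
    (hu : u ~r u') (hv : v ~r v') (hwuv : w.prod * u'.prod = v'.prod * w.prod) {i j k l : ℕ}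
    (hconn : ConnectedComponents H 1 w i j v'.prod w k l) : k = i ∧ l = j := by
  have h₁ := isPCConjugator_mul_prefix hu hv hwuv (List.append_nil u').symm
  have h₂ := isPCConjugator_inv_prefix_mul hu hv hwuv (List.append_nil v').symm
  rw [hwuv] at h₁
  exact hw.eq_of_connected h₁ h₂ hconn

end IsMinimalWord

theorem horizontal_bands_general {Ω : Type*}
    (X : Set G) (H : Ω → Subgroup G)
    (u₁ u₂ v₁ v₂ : List G)
    (w : List G) (hw : IsGeodesicWord (relGen X H) w)
    (hmin : ∀ z : G, IsPCConjugator (u₁ ++ u₂) (v₁ ++ v₂) z →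
      wlen (relGen X H) w.prod ≤ wlen (relGen X H) z)
    (heq : w.prod * (u₂ ++ u₁).prod = (v₂ ++ v₁).prod * w.prod)
    (u1d u2d v1d v2d : List G)
    (hu1 : IsDerived X H u₁ u1d) (hu2 : IsDerived X H u₂ u2d)
    (hv1 : IsDerived X H v₁ v1d) (hv2 : IsDerived X H v₂ v2d)
    -- the six sides of the hexagon `Q`, each given with its base vertex
    (sides : Fin 6 → G × List G)
    (hsides : sides = ![((1 : G), w), (w.prod, u2d), (w.prod * u₂.prod, u1d),
      ((v₂ ++ v₁).prod, w), ((1 : G), v2d), (v₂.prod, v1d)])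
    (i : ℕ) :
    -- (1) a non-isolated middle edge lies in a horizontal band
    (1 < i → i < w.length →
      (∃ b : Fin 6, ∃ k l : ℕ, ¬(b = (0 : Fin 6) ∧ k = i - 1 ∧ l = i) ∧
        ConnectedComponents H 1 w (i - 1) i (sides b).1 (sides b).2 k l) →
      ConnectedComponents H 1 w (i - 1) i ((v₂ ++ v₁).prod) w (i - 1) i) ∧
    -- (2) the first and last edges: any connection to the opposite `w`-side is
    -- a horizontal band
    ((i = 1 ∨ i = w.length) →
      ∀ k l : ℕ, ConnectedComponents H 1 w (i - 1) i ((v₂ ++ v₁).prod) w k l →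
        k = i - 1 ∧ l = i) := by
  have hu : u₁ ++ u₂ ~r u₂ ++ u₁ := List.isRotated_append
  have hv : v₁ ++ v₂ ~r v₂ ++ v₁ := List.isRotated_append
  have hwmin : IsMinimalWord (relGen X H) (IsPCConjugator (u₁ ++ u₂) (v₁ ++ v₂)) w :=
    ⟨hw.1, fun z hz => hw.2 ▸ hmin z hz⟩
  have hwpc : IsPCConjugator (u₁ ++ u₂) (v₁ ++ v₂) w.prod :=
    ⟨_, _, isCyclicPerm_of_isRotated hu, isCyclicPerm_of_isRotated hv, heq⟩
  refine ⟨fun hi hin ⟨b, k, l, hne, hconn⟩ => ?_,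
    fun _ k l => hwmin.eq_of_connected_opposite hu hv heq⟩
  subst hsides
  fin_cases b
  · exact absurd (hwmin.eq_of_connected (V := 1) (by simpa using hwpc) (by simpa using hwpc)
      hconn) (by simpa using hne)
  · have := hwmin.length_le_of_connected_uSide hu hv heq (p := []) (q := u₂) (r := u₁) rfl hu2
      (by simpa using hconn)
    omega
  · have := hwmin.length_le_of_connected_uSide hu hv heq (p := u₂) (q := u₁) (r := [])
      (List.append_nil _).symm hu1 hconn
    omega
  · obtain ⟨rfl, rfl⟩ := hwmin.eq_of_connected_opposite hu hv heq hconn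
    exact hconn
  · have := hwmin.le_one_of_connected_vSide hu hv heq (p := []) (q := v₂) (r := v₁) rfl hv2
      (by simpa using hconn)
    omega
  · have := hwmin.le_one_of_connected_vSide hu hv heq (p := v₂) (q := v₁) (r := [])
      (List.append_nil _).symm hv1 hconn
    omega

/-- **Lemma (horizontal bands).** Let `G` be hyperbolic relative to `{H_ω}`, with
`X` as in the generating set lemma and `S = X ∪ ⋃_ω (H_ω \ {1})`. Let
`w ≡ s_1…s_n` be a geodesic word on `S` representing a PC-conjugator of minimal
`S`-length for the geodesic words `u ≡ u₁u₂` and `v ≡ v₁v₂`, with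
`w·(u₂u₁) = (v₂v₁)·w`. Consider the hexagon `Q` with two opposite sides labelled
`w` (based at `1` and at `v' = v₂v₁`) and the remaining four sides labelled by the
derived words of `u₁, u₂, v₁, v₂`. Then: (1) for `1 < i < n`, if the edge labelled
`s_i` on the side from `1` to `w` is not isolated in `Q`, it is connected to the
edge labelled `s_i` on the opposite `w`-side (a horizontal band); (2) for `i = 1`
or `i = n`, if that edge is connected to a component of the opposite `w`-side, then
it is connected to the edge labelled `s_i` of that side. -/
theorem horizontal_bands {Ω : Type*}
    (X : Set G) (H : Ω → Subgroup G) (lam c : ℝ)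
    (hgood : GoodGenSet X H lam c) (hrel : RelativelyHyperbolic X H)
    (u₁ u₂ v₁ v₂ : List G)
    (hu : IsGeodesicWord X (u₁ ++ u₂)) (hv : IsGeodesicWord X (v₁ ++ v₂))
    (hconj : IsConj (u₁ ++ u₂).prod (v₁ ++ v₂).prod)
    (w : List G) (hw : IsGeodesicWord (relGen X H) w)
    (hpc : IsPCConjugator (u₁ ++ u₂) (v₁ ++ v₂) w.prod)
    (hmin : ∀ z : G, IsPCConjugator (u₁ ++ u₂) (v₁ ++ v₂) z →
      wlen (relGen X H) w.prod ≤ wlen (relGen X H) z)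
    (heq : w.prod * (u₂ ++ u₁).prod = (v₂ ++ v₁).prod * w.prod)
    (u1d u2d v1d v2d : List G)
    (hu1 : IsDerived X H u₁ u1d) (hu2 : IsDerived X H u₂ u2d)
    (hv1 : IsDerived X H v₁ v1d) (hv2 : IsDerived X H v₂ v2d)
    (hu1q : IsQuasiGeodesicWord (relGen X H) lam c u1d)
    (hu2q : IsQuasiGeodesicWord (relGen X H) lam c u2d)
    (hv1q : IsQuasiGeodesicWord (relGen X H) lam c v1d)
    (hv2q : IsQuasiGeodesicWord (relGen X H) lam c v2d)
    -- the six sides of the hexagon `Q`, each given with its base vertex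
    (sides : Fin 6 → G × List G)
    (hsides : sides = ![((1 : G), w), (w.prod, u2d), (w.prod * u₂.prod, u1d),
      ((v₂ ++ v₁).prod, w), ((1 : G), v2d), (v₂.prod, v1d)])
    (i : ℕ) (hi1 : 1 ≤ i) (hin : i ≤ w.length)
    (ω : Ω) (hcomp : IsComponent (H ω) w (i - 1) i) :
    -- (1) a non-isolated middle edge lies in a horizontal band
    (1 < i → i < w.length →
      (∃ b : Fin 6, ∃ k l : ℕ, ¬(b = (0 : Fin 6) ∧ k = i - 1 ∧ l = i) ∧
        ConnectedComponents H 1 w (i - 1) i (sides b).1 (sides b).2 k l) →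
      ConnectedComponents H 1 w (i - 1) i ((v₂ ++ v₁).prod) w (i - 1) i) ∧
    -- (2) the first and last edges: any connection to the opposite `w`-side is
    -- a horizontal band
    ((i = 1 ∨ i = w.length) →
      ∀ k l : ℕ, ConnectedComponents H 1 w (i - 1) i ((v₂ ++ v₁).prod) w k l →
        k = i - 1 ∧ l = i) :=
  horizontal_bands_general X H u₁ u₂ v₁ v₂ w hw hmin heq u1d u2d v1d v2d hu1 hu2 hv1 hv2 sides
    hsides i
end PCLPaper
end
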